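/- arXiv:0912.2923 — 12 statements merged into one kernel-verified Lean document; each statement's English description precedes it below -/
import Mathlib

section
/- Let χ be an integer and let a be a positive even integer. Then the coefficient of t^a in the formal power series M(t)^{2χ} is congruent modulo 4 to (−1)^{a/2} times the coefficient of t^{a/2} in M(t)^{χ}. -/
/-
Write `σ f (t) = f (-t²)`, so that the coefficient of `t^(2b)` in `σ f` is `(-1)^b` times the
coefficient of `t^b` in `f`, and all odd coefficients of `σ f` vanish. Over `ZMod 4` compare
`f²` with `σ f` through the multiplicative defect `δ u = σ u / u²`. For `u = 1 - t^m` we have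
`u² ≡ σ u (mod 2)`; hence if `m` is even then `δ u` is an involution and `δ u ^ m = 1`, while if
`m` is odd then `δ u⁻¹ = 1 - 2 t^m σ(u⁻¹)` is `1 + 2g` with `g` supported in odd degrees.
Such units form a subgroup, so for `P = M^χ` (a product of `u^(-mχ)`, truncated to the factors
that matter) `P² = σ P · (1 + 2g)` with `g` odd, whose even coefficients are those of `σ P`.
-/

open PowerSeries Finset

/-- The unit `1 - (ε t)^(n+1)` of `ℤ⟦t⟧`. -/
noncomputable def oneSubUnit (ε : ℤ) (n : ℕ) : (PowerSeries ℤ)ˣ :=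
  IsUnit.unit (a := (1 : PowerSeries ℤ) - (PowerSeries.C ε * PowerSeries.X) ^ (n + 1))
    (by
      rw [PowerSeries.isUnit_iff_constantCoeff]
      simp)

/-- The coefficient of `t^a` in `M(ε t)^m`, where `M` is the MacMahon function
`M(t) = ∏_{n ≥ 1} (1 - t^n)^{-n}` and the (integer) power is taken in the group of units
of `ℤ⟦t⟧`.  Since the factor `(1 - (ε t)^n)^{-n m}` is `1 + O(t^n)`, only the factors with
`1 ≤ n ≤ a` affect the coefficient of `t^a`, so the coefficient of the infinite product
equals the corresponding coefficient of the finite product over `1 ≤ n ≤ a`. -/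
noncomputable def macMahonPowCoeff (ε m : ℤ) (a : ℕ) : ℤ :=
  PowerSeries.coeff a
    ↑(∏ n ∈ Finset.range a, (oneSubUnit ε n) ^ (-(((n : ℤ) + 1) * m)))

section Parity

variable {R : Type*} [CommRing R]

def HasParity (f : R⟦X⟧) (p : ZMod 2) : Prop :=
  ∀ k : ℕ, (k : ZMod 2) ≠ p → coeff k f = 0

theorem HasParity.neg {f : R⟦X⟧} {p : ZMod 2} (hf : HasParity f p) : HasParity (-f) p :=
  fun k hk => by rw [map_neg, hf k hk, neg_zero]

theorem HasParity.add {f g : R⟦X⟧} {p : ZMod 2} (hf : HasParity f p) (hg : HasParity g p) :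
    HasParity (f + g) p :=
  fun k hk => by rw [map_add, hf k hk, hg k hk, add_zero]

theorem HasParity.mul {f g : R⟦X⟧} {p q : ZMod 2} (hf : HasParity f p) (hg : HasParity g q) :
    HasParity (f * g) (p + q) := by
  intro k hk
  rw [coeff_mul]
  refine sum_eq_zero fun ij hij => ?_
  rw [HasAntidiagonal.mem_antidiagonal] at hij
  by_cases hi : (ij.1 : ZMod 2) = p
  · have hj : (ij.2 : ZMod 2) ≠ q := fun hj => hk (by rw [← hij, Nat.cast_add, hi, hj])
    rw [hg _ hj, mul_zero]
  · rw [hf _ hi, zero_mul]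

theorem hasParity_X_pow (m : ℕ) : HasParity (X ^ m : R⟦X⟧) m :=
  fun k hk => by rw [coeff_X_pow, if_neg (by rintro rfl; exact hk rfl)]

end Parity

section NegSqSubst

variable {R : Type*} [CommRing R]

/-- `f(t) ↦ f(-t²)`. -/
noncomputable def negSqSubst : R⟦X⟧ →+* R⟦X⟧ :=
  (expand 2 two_ne_zero).toRingHom.comp (rescale (-1))

theorem coeff_two_mul_negSqSubst (f : R⟦X⟧) (b : ℕ) :
    coeff (2 * b) (negSqSubst f) = (-1) ^ b * coeff b f := by
  simp [negSqSubst, coeff_rescale]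

theorem hasParity_negSqSubst (f : R⟦X⟧) : HasParity (negSqSubst f) 0 := by
  intro k hk
  exact coeff_expand_of_not_dvd 2 two_ne_zero _ fun h =>
    hk ((ZMod.natCast_eq_zero_iff_even).2 (even_iff_two_dvd.2 h))

theorem negSqSubst_X : negSqSubst (X : R⟦X⟧) = -X ^ 2 := by
  simp [negSqSubst, rescale_X]

noncomputable def negSqDefect : R⟦X⟧ˣ →* R⟦X⟧ˣ :=
  Units.map (negSqSubst : R⟦X⟧ →+* R⟦X⟧).toMonoidHom * zpowGroupHom (-2)

theorem val_negSqDefect_inv (u : R⟦X⟧ˣ) :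
    (((negSqDefect u)⁻¹ : R⟦X⟧ˣ) : R⟦X⟧) = (u : R⟦X⟧) ^ 2 * negSqSubst ↑u⁻¹ := by
  simp [negSqDefect, mul_comm]

end NegSqSubst

theorem four_eq_zero : (4 : (ZMod 4)⟦X⟧) = 0 := by
  rw [← map_ofNat (C (R := ZMod 4)) 4, show (4 : ZMod 4) = 0 from rfl, map_zero]

theorem one_add_two_mul_sq (g : (ZMod 4)⟦X⟧) : (1 + 2 * g) ^ 2 = 1 := by
  linear_combination (g + g ^ 2) * four_eq_zero

def oddDeviationSubgroup : Subgroup (ZMod 4)⟦X⟧ˣ where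
  carrier := {u | ∃ g, (u : (ZMod 4)⟦X⟧) = 1 + 2 * g ∧ HasParity g 1}
  one_mem' := ⟨0, by simp, fun _ _ => map_zero _⟩
  mul_mem' := by
    rintro u v ⟨g, hu, hg⟩ ⟨h, hv, hh⟩
    refine ⟨g + h, ?_, hg.add hh⟩
    rw [Units.val_mul, hu, hv]
    linear_combination g * h * four_eq_zero
  inv_mem' := by
    rintro u ⟨g, hu, hg⟩
    have hinv : u⁻¹ = u := inv_eq_of_mul_eq_one_left <| Units.ext <| by
      rw [Units.val_mul, hu, ← sq, one_add_two_mul_sq, Units.val_one]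
    exact ⟨g, hinv ▸ hu, hg⟩

theorem negSqDefect_pow_mem {v : (ZMod 4)⟦X⟧ˣ} {m : ℕ} (hv : (v : (ZMod 4)⟦X⟧) = 1 - X ^ m) :
    negSqDefect v ^ m ∈ oddDeviationSubgroup := by
  set s : (ZMod 4)⟦X⟧ := negSqSubst ↑v⁻¹
  have hs : (1 - (-X ^ 2) ^ m) * s = 1 := by
    rw [← negSqSubst_X, ← map_pow, ← map_one negSqSubst, ← map_sub, ← hv, ← map_mul,
      Units.mul_inv, map_one]
  have hδ := val_negSqDefect_inv v
  rw [hv] at hδ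
  rcases Nat.even_or_odd m with hm | hm
  · rw [hm.neg_pow] at hs
    have hsq : (negSqDefect v)⁻¹ ^ 2 = 1 := Units.ext <| by
      rw [Units.val_pow_eq_pow_val, hδ, Units.val_one,
        show (1 - X ^ m) ^ 2 * s = 1 + 2 * ((X ^ (2 * m) - X ^ m) * s) by linear_combination hs]
      exact one_add_two_mul_sq _
    obtain ⟨k, rfl⟩ := hm
    rw [inv_pow, inv_eq_one] at hsq
    rw [← two_mul, pow_mul, hsq, one_pow]
    exact one_mem _
  · rw [hm.neg_pow] at hs
    have hinv : (negSqDefect v)⁻¹ ∈ oddDeviationSubgroup := by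
      refine ⟨-(X ^ m * s), ?_, ?_⟩
      · rw [hδ]
        linear_combination hs
      · have hpar := (hasParity_X_pow (R := ZMod 4) m).mul (hasParity_negSqSubst ↑v⁻¹)
        rw [(ZMod.natCast_eq_one_iff_odd).2 hm, add_zero] at hpar
        exact hpar.neg
    exact pow_mem (inv_mem_iff.1 hinv) m

theorem coeff_two_mul_sq_of_negSqDefect_mem {Q : (ZMod 4)⟦X⟧ˣ}
    (hQ : negSqDefect Q ∈ oddDeviationSubgroup) (b : ℕ) :
    coeff (2 * b) ((Q : (ZMod 4)⟦X⟧) ^ 2) = (-1) ^ b * coeff b (Q : (ZMod 4)⟦X⟧) := by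
  obtain ⟨g, hg, hpar⟩ := inv_mem hQ
  rw [val_negSqDefect_inv] at hg
  have hinv : negSqSubst (↑Q⁻¹ : (ZMod 4)⟦X⟧) * negSqSubst ↑Q = 1 := by
    rw [← map_mul, Units.inv_mul, map_one]
  have hsq : (Q : (ZMod 4)⟦X⟧) ^ 2 = negSqSubst ↑Q + C 2 * (negSqSubst ↑Q * g) := by
    rw [map_ofNat]
    linear_combination negSqSubst (Q : (ZMod 4)⟦X⟧) * hg - (Q : (ZMod 4)⟦X⟧) ^ 2 * hinv
  have hodd : coeff (2 * b) (negSqSubst (Q : (ZMod 4)⟦X⟧) * g) = 0 :=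
    (hasParity_negSqSubst _).mul hpar _ (by simp [show (2 : ZMod 2) = 0 from rfl])
  rw [hsq, map_add, coeff_C_mul, hodd, mul_zero, add_zero, coeff_two_mul_negSqSubst]

theorem negSqDefect_prod_mem (s : Finset ℕ) {v : ℕ → (ZMod 4)⟦X⟧ˣ}
    (hv : ∀ n, (v n : (ZMod 4)⟦X⟧) = 1 - X ^ (n + 1)) (χ : ℤ) :
    negSqDefect (∏ n ∈ s, v n ^ (-(((n : ℤ) + 1) * χ))) ∈ oddDeviationSubgroup := by
  rw [map_prod]
  refine prod_mem fun n _ => ?_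
  rw [map_zpow, show -(((n : ℤ) + 1) * χ) = ((n + 1 : ℕ) : ℤ) * -χ by push_cast; ring,
    zpow_mul, zpow_natCast]
  exact zpow_mem (negSqDefect_pow_mem (hv n)) _

noncomputable def unitsCongrOneModXPow (R : Type*) [CommRing R] (N : ℕ) : Subgroup R⟦X⟧ˣ :=
  (Units.map (Ideal.Quotient.mk (Ideal.span {(X : R⟦X⟧) ^ N})).toMonoidHom).ker

section Truncation

variable {R : Type*} [CommRing R]

theorem mem_unitsCongrOneModXPow {N : ℕ} {u : R⟦X⟧ˣ} :
    u ∈ unitsCongrOneModXPow R N ↔ X ^ N ∣ (u : R⟦X⟧) - 1 := by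
  rw [unitsCongrOneModXPow, MonoidHom.mem_ker, Units.ext_iff, Units.coe_map, Units.val_one]
  change Ideal.Quotient.mk _ (u : R⟦X⟧) = 1 ↔ _
  rw [← map_one (Ideal.Quotient.mk _), Ideal.Quotient.eq, Ideal.mem_span_singleton]

theorem coeff_mul_of_X_pow_dvd_sub_one {N : ℕ} (f : R⟦X⟧) {u : R⟦X⟧}
    (hu : X ^ (N + 1) ∣ u - 1) : coeff N (f * u) = coeff N f := by
  obtain ⟨g, hg⟩ := hu
  rw [show f * u = f + X ^ (N + 1) * (f * g) by linear_combination f * hg, map_add,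
    coeff_X_pow_mul', if_neg (by omega), add_zero]

theorem oneSubUnit_mem_unitsCongrOneModXPow (ε : ℤ) {n N : ℕ} (h : N ≤ n + 1) :
    oneSubUnit ε n ∈ unitsCongrOneModXPow ℤ N := by
  rw [mem_unitsCongrOneModXPow, oneSubUnit, IsUnit.unit_spec, sub_sub_cancel_left, mul_pow,
    dvd_neg]
  exact (pow_dvd_pow X h).mul_left _

theorem macMahonPowCoeff_eq_coeff_prod (ε m : ℤ) {a N : ℕ} (h : a ≤ N) :
    macMahonPowCoeff ε m a =
      coeff a (↑(∏ n ∈ range N, oneSubUnit ε n ^ (-(((n : ℤ) + 1) * m))) : ℤ⟦X⟧) := by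
  obtain ⟨k, rfl⟩ := Nat.exists_eq_add_of_le h
  have htail : ∏ i ∈ range k, oneSubUnit ε (a + i) ^ (-((((a + i : ℕ) : ℤ) + 1) * m)) ∈
      unitsCongrOneModXPow ℤ (a + 1) :=
    prod_mem fun i _ => zpow_mem (oneSubUnit_mem_unitsCongrOneModXPow ε (by omega)) _
  rw [prod_range_add, Units.val_mul,
    coeff_mul_of_X_pow_dvd_sub_one _ (mem_unitsCongrOneModXPow.1 htail), macMahonPowCoeff]

end Truncation

theorem coeff_map_intCast {R : Type*} [CommRing R] (n : ℕ) (f : ℤ⟦X⟧) :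
    coeff n (map (Int.castRingHom R) f) = ((coeff n f : ℤ) : R) := by
  rw [coeff_map, eq_intCast]

theorem val_map_oneSubUnit_one (R : Type*) [CommRing R] (n : ℕ) :
    (Units.map (map (Int.castRingHom R)).toMonoidHom (oneSubUnit 1 n) : R⟦X⟧) =
      1 - X ^ (n + 1) := by
  simp [oneSubUnit]

theorem coeff_macMahon_two_chi_mod_four_general (χ : ℤ) (a : ℕ) (ha2 : 2 ∣ a) :
    macMahonPowCoeff 1 (2 * χ) a ≡ (-1) ^ (a / 2) * macMahonPowCoeff 1 χ (a / 2) [ZMOD 4] := by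
  obtain ⟨b, rfl⟩ := ha2
  have hQ : negSqDefect (Units.map (map (Int.castRingHom (ZMod 4))).toMonoidHom
      (∏ n ∈ range (2 * b), oneSubUnit 1 n ^ (-(((n : ℤ) + 1) * χ)))) ∈
      oddDeviationSubgroup := by
    rw [map_prod]
    simp_rw [map_zpow]
    exact negSqDefect_prod_mem _ (val_map_oneSubUnit_one (ZMod 4)) χ
  set P := ∏ n ∈ range (2 * b), oneSubUnit 1 n ^ (-(((n : ℤ) + 1) * χ))
  have hsq : macMahonPowCoeff 1 (2 * χ) (2 * b) = coeff (2 * b) ((P : ℤ⟦X⟧) ^ 2) := by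
    rw [macMahonPowCoeff, ← Units.val_pow_eq_pow_val, ← prod_pow]
    congr 3 with n
    rw [← zpow_natCast, ← zpow_mul]
    ring_nf
  have htrunc : macMahonPowCoeff 1 χ b = coeff b (P : ℤ⟦X⟧) :=
    macMahonPowCoeff_eq_coeff_prod 1 χ (by omega)
  rw [Nat.mul_div_cancel_left b two_pos, hsq, htrunc]
  refine (ZMod.intCast_eq_intCast_iff _ _ 4).1 ?_
  push_cast
  rw [← coeff_map_intCast, ← coeff_map_intCast, map_pow]
  exact coeff_two_mul_sq_of_negSqDefect_mem hQ b

/-- For `χ ∈ ℤ` and `a` a positive even integer, the coefficient of `t^a` in `M(t)^{2χ}`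
is congruent mod 4 to `(-1)^{a/2}` times the coefficient of `t^{a/2}` in `M(t)^{χ}`. -/
theorem coeff_macMahon_two_chi_mod_four (χ : ℤ) (a : ℕ) (ha : 0 < a) (ha2 : 2 ∣ a) :
    macMahonPowCoeff 1 (2 * χ) a ≡ (-1) ^ (a / 2) * macMahonPowCoeff 1 χ (a / 2) [ZMOD 4] :=
  coeff_macMahon_two_chi_mod_four_general χ a ha2
end

section
/- Let χ be an integer and let a be a positive integer divisible by 3. Then the coefficient of t^a in the formal power series M(−t)^{3χ} is congruent modulo 9 to the coefficient of t^{a/3} in M(−t)^{χ}. -/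
/-!
Put `y = (ε t)^m` with `ε^3 = ε`, so that the expansion `t ↦ t^3` sends `1 - y` to `1 - y^3`.
From `(1 - y)^3 = (1 - y^3) - 3 (y - y^2)`, modulo 9 the cube of `1 - y` is its expansion times
`1 + 3 g` with `g = -(y - y^2) / (1 - y^3)`. If `3 ∤ m`, then `g` has no terms in degrees divisible
by 3, because `y - y^2` has none and `1 / (1 - y^3)` is a series in `t^3`. If `3 ∣ m`, the
exponent `m c` of the factor kills the correction, since `(1 + 3 g)^3 ≡ 1`. Modulo 9, the series
`w ≡ 1 mod 3` for which `w - 1` has no terms in degrees divisible by 3 form a group. So for every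
finite product `F` of factors `(1 - (ε t)^m)^{m c}` we have `F^3 = F(t^3) · w` with such a `w`,
and the coefficient of `t^{3k}` in `F^3` is that of `t^k` in `F`.
-/

open PowerSeries Finset

section Truncation

variable {R : Type*} [CommRing R]

noncomputable def unitsCongrOne (k : ℕ) : Subgroup R⟦X⟧ˣ :=
  (Units.map (Ideal.Quotient.mk (Ideal.span {(X : R⟦X⟧) ^ k})).toMonoidHom).ker

theorem mem_unitsCongrOne {k : ℕ} {u : R⟦X⟧ˣ} :
    u ∈ unitsCongrOne k ↔ (X : R⟦X⟧) ^ k ∣ ↑u - 1 := by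
  rw [unitsCongrOne, MonoidHom.mem_ker, Units.ext_iff, Units.coe_map, Units.val_one,
    ← map_one (Ideal.Quotient.mk _)]
  exact Ideal.Quotient.eq.trans Ideal.mem_span_singleton

theorem coeff_prod_range_eq_of_mem_unitsCongrOne {u : ℕ → R⟦X⟧ˣ}
    (hu : ∀ n, u n ∈ unitsCongrOne (n + 1)) {k N : ℕ} (hkN : k ≤ N) :
    coeff k (↑(∏ n ∈ range N, u n) : R⟦X⟧) = coeff k (↑(∏ n ∈ range k, u n) : R⟦X⟧) := by
  have htail : ∏ n ∈ Ico k N, u n ∈ unitsCongrOne (k + 1) :=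
    Subgroup.prod_mem _ fun n hn => mem_unitsCongrOne.2 <|
      (pow_dvd_pow X (by rw [mem_Ico] at hn; omega)).trans (mem_unitsCongrOne.1 (hu n))
  have hdvd := (mem_unitsCongrOne.1 htail).mul_left (↑(∏ n ∈ range k, u n) : R⟦X⟧)
  rw [← prod_range_mul_prod_Ico u hkN, Units.val_mul]
  simpa [mul_sub, sub_eq_zero] using X_pow_dvd_iff.1 hdvd k (Nat.lt_succ_self k)

end Truncation

theorem oneSubUnit_mem_unitsCongrOne (ε : ℤ) (n : ℕ) :
    oneSubUnit ε n ∈ unitsCongrOne (n + 1) := by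
  rw [mem_unitsCongrOne, oneSubUnit, IsUnit.unit_spec, sub_sub_cancel_left, dvd_neg, mul_pow]
  exact dvd_mul_left _ _

theorem macMahonPowCoeff_eq_coeff_prod_range (ε m : ℤ) {k N : ℕ} (hkN : k ≤ N) :
    macMahonPowCoeff ε m k =
      coeff k ↑(∏ n ∈ range N, oneSubUnit ε n ^ (-(((n : ℤ) + 1) * m))) :=
  (coeff_prod_range_eq_of_mem_unitsCongrOne
    (fun n => Subgroup.zpow_mem _ (oneSubUnit_mem_unitsCongrOne ε n) _) hkN).symm

section Expand

variable {R : Type*} [CommRing R] {p : ℕ} (hp : p ≠ 0)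

theorem coeff_mul_expand_mul_eq_zero {g : R⟦X⟧} (hg : ∀ k, coeff (p * k) g = 0) (f : R⟦X⟧)
    (k : ℕ) : coeff (p * k) (expand p hp f * g) = 0 := by
  rw [coeff_mul]
  refine sum_eq_zero fun ⟨i, j⟩ hij => ?_
  rw [HasAntidiagonal.mem_antidiagonal] at hij
  by_cases hi : p ∣ i
  · obtain ⟨j', rfl⟩ : p ∣ j := (Nat.dvd_add_right hi).1 (hij ▸ dvd_mul_right p k)
    rw [hg, mul_zero]
  · rw [coeff_expand_of_not_dvd p hp f hi, zero_mul]

theorem coeff_mul_expand_mul_one_add {g : R⟦X⟧} (hg : ∀ k, coeff (p * k) g = 0) (f : R⟦X⟧)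
    (k : ℕ) : coeff (p * k) (expand p hp f * (1 + g)) = coeff k f := by
  rw [mul_one_add, map_add, coeff_mul_expand_mul_eq_zero hp hg, add_zero, coeff_expand_mul]

variable (R) in
noncomputable def cubeDivExpand : R⟦X⟧ˣ →* R⟦X⟧ˣ :=
  powMonoidHom 3 / Units.map (expand 3 three_ne_zero : R⟦X⟧ →ₐ[R] R⟦X⟧).toMonoidHom

theorem val_cubeDivExpand_of_val_eq {u : R⟦X⟧ˣ} {y : R⟦X⟧} (hu : (u : R⟦X⟧) = 1 - y)
    (hy : expand 3 three_ne_zero y = y ^ 3) :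
    (cubeDivExpand R u : R⟦X⟧) = 1 - 3 * (expand 3 three_ne_zero ↑u⁻¹ * (y - y ^ 2)) := by
  set w := cubeDivExpand R u
  set E := expand 3 three_ne_zero (↑u⁻¹ : R⟦X⟧)
  have hw : (w : R⟦X⟧) * expand 3 three_ne_zero ↑u = (u : R⟦X⟧) ^ 3 := by
    rw [← Units.val_pow_eq_pow_val, ← div_mul_cancel (u ^ 3) (Units.map _ u)]
    rfl
  have hE : E * expand 3 three_ne_zero ↑u = 1 := by
    rw [← map_mul, Units.inv_mul, map_one]
  rw [hu, map_sub, map_one, hy] at hw hE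
  linear_combination E * hw - ((w : R⟦X⟧) - 1) * hE

end Expand

section ModNine

variable {R : Type*} [CommRing R] [CharP R 9]

theorem PowerSeries.nine_eq_zero : (9 : R⟦X⟧) = 0 := by
  rw [← map_ofNat C 9, CharP.ofNat_eq_zero, map_zero]

theorem pow_three_eq_one_of_three_dvd_sub_one {w : R⟦X⟧} (hw : 3 ∣ w - 1) : w ^ 3 = 1 := by
  obtain ⟨g, hg⟩ := hw
  rw [sub_eq_iff_eq_add.1 hg]
  linear_combination (g + 3 * g ^ 2 + 3 * g ^ 3) * nine_eq_zero (R := R)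

theorem mul_sub_one_of_three_dvd_sub_one {v w : R⟦X⟧} (hv : 3 ∣ v - 1) (hw : 3 ∣ w - 1) :
    v * w - 1 = (v - 1) + (w - 1) := by
  obtain ⟨a, ha⟩ := hv
  obtain ⟨b, hb⟩ := hw
  linear_combination (v - 1) * hb + 3 * b * ha + a * b * nine_eq_zero (R := R)

variable (R) in
noncomputable def threeSectionOneUnits : Subgroup R⟦X⟧ˣ where
  carrier := {w | 3 ∣ (w : R⟦X⟧) - 1 ∧ ∀ k, coeff (3 * k) ((w : R⟦X⟧) - 1) = 0}
  one_mem' := by simp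
  mul_mem' := by
    rintro v w ⟨hv3, hv⟩ ⟨hw3, hw⟩
    simp only [Set.mem_ofPred_eq, Units.val_mul, mul_sub_one_of_three_dvd_sub_one hv3 hw3]
    exact ⟨dvd_add hv3 hw3, fun k => by rw [map_add, hv, hw, add_zero]⟩
  inv_mem' := by
    rintro w ⟨hw3, hw⟩
    have hinv : ((w⁻¹ : R⟦X⟧ˣ) : R⟦X⟧) - 1 = -((w : R⟦X⟧) - 1) := by
      rw [Units.inv_eq_of_mul_eq_one_right (a := 2 - (w : R⟦X⟧))]
      · ring
      · obtain ⟨a, ha⟩ := hw3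
        linear_combination (1 - (w : R⟦X⟧) - 3 * a) * ha - a ^ 2 * nine_eq_zero (R := R)
    simp only [Set.mem_ofPred_eq, hinv, dvd_neg, map_neg, neg_eq_zero]
    exact ⟨hw3, hw⟩

theorem coeff_three_mul_pow_three_of_mem {v : R⟦X⟧ˣ}
    (hv : v ∈ (threeSectionOneUnits R).comap (cubeDivExpand R)) (k : ℕ) :
    coeff (3 * k) (↑(v ^ 3) : R⟦X⟧) = coeff k (v : R⟦X⟧) := by
  have hcube : v ^ 3 = Units.map (expand 3 three_ne_zero : R⟦X⟧ →ₐ[R] R⟦X⟧).toMonoidHom v *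
      cubeDivExpand R v := by
    rw [mul_comm, cubeDivExpand, MonoidHom.div_apply, div_mul_cancel, powMonoidHom_apply]
  rw [hcube, Units.val_mul, Units.coe_map, ← add_sub_cancel 1 (cubeDivExpand R v : R⟦X⟧)]
  exact coeff_mul_expand_mul_one_add three_ne_zero hv.2 _ k

theorem cubeDivExpand_pow_three_of_val_eq {u : R⟦X⟧ˣ} {y : R⟦X⟧} (hu : (u : R⟦X⟧) = 1 - y)
    (hy : expand 3 three_ne_zero y = y ^ 3) : cubeDivExpand R u ^ 3 = 1 := by
  apply Units.ext
  rw [Units.val_pow_eq_pow_val, val_cubeDivExpand_of_val_eq hu hy, Units.val_one]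
  exact pow_three_eq_one_of_three_dvd_sub_one
    ⟨-(expand 3 three_ne_zero ↑u⁻¹ * (y - y ^ 2)), by ring⟩

theorem cubeDivExpand_mem_of_val_eq {u : R⟦X⟧ˣ} {y : R⟦X⟧} (hu : (u : R⟦X⟧) = 1 - y)
    (hy : expand 3 three_ne_zero y = y ^ 3) (hsec : ∀ k, coeff (3 * k) (y - y ^ 2) = 0) :
    cubeDivExpand R u ∈ threeSectionOneUnits R := by
  refine ⟨?_, fun k => ?_⟩ <;> rw [val_cubeDivExpand_of_val_eq hu hy, sub_sub_cancel_left]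
  · exact (dvd_mul_right _ _).neg_right
  · rw [map_neg, ← map_ofNat C 3, coeff_C_mul, coeff_mul_expand_mul_eq_zero three_ne_zero hsec,
      mul_zero, neg_zero]

theorem zpow_mem_comap_cubeDivExpand {ε : R} (hε : ε ^ 3 = ε) {m : ℕ} {u : R⟦X⟧ˣ}
    (hu : (u : R⟦X⟧) = 1 - (C ε * X) ^ m) (c : ℤ) :
    u ^ ((m : ℤ) * c) ∈ (threeSectionOneUnits R).comap (cubeDivExpand R) := by
  have hy : expand 3 three_ne_zero ((C ε * X) ^ m) = ((C ε * X) ^ m) ^ 3 := by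
    rw [← pow_mul, mul_comm m 3, pow_mul, map_pow, map_mul, expand_C, expand_X,
      mul_pow (C ε) X 3, ← map_pow, hε]
  by_cases h3 : 3 ∣ m
  · obtain ⟨m', rfl⟩ := h3
    rw [Subgroup.mem_comap, map_zpow, Nat.cast_mul, Nat.cast_ofNat, mul_assoc, zpow_mul,
      zpow_ofNat, cubeDivExpand_pow_three_of_val_eq hu hy, one_zpow]
    exact one_mem _
  · refine Subgroup.zpow_mem _ (Subgroup.mem_comap.2 <|
      cubeDivExpand_mem_of_val_eq hu hy fun k => ?_) _
    rw [← pow_mul, mul_pow, mul_pow, ← map_pow, ← map_pow, map_sub, coeff_C_mul_X_pow,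
      coeff_C_mul_X_pow, if_neg (by omega), if_neg (by omega), sub_zero]

end ModNine

theorem macMahonPowCoeff_three_mul_modEq {ε : ℤ} (hε : ε ^ 3 = ε) (m : ℤ) (k : ℕ) :
    macMahonPowCoeff ε (3 * m) (3 * k) ≡ macMahonPowCoeff ε m k [ZMOD 9] := by
  set F := ∏ n ∈ range (3 * k), oneSubUnit ε n ^ (-(((n : ℤ) + 1) * m))
  have hcube : macMahonPowCoeff ε (3 * m) (3 * k) = coeff (3 * k) (↑(F ^ 3) : ℤ⟦X⟧) := by
    rw [macMahonPowCoeff, ← prod_pow]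
    congr 3 with n
    rw [← zpow_natCast, ← zpow_mul]
    ring_nf
  have htrunc : macMahonPowCoeff ε m k = coeff k (↑F : ℤ⟦X⟧) :=
    macMahonPowCoeff_eq_coeff_prod_range ε m (by omega)
  set φ := map (Int.castRingHom (ZMod 9))
  have hcast (f : ℤ⟦X⟧) (n : ℕ) : ((coeff n f : ℤ) : ZMod 9) = coeff n (φ f) := by
    rw [coeff_map]; rfl
  have hF : Units.map (φ : ℤ⟦X⟧ →* (ZMod 9)⟦X⟧) F ∈
      (threeSectionOneUnits (ZMod 9)).comap (cubeDivExpand (ZMod 9)) := by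
    rw [map_prod]
    refine Subgroup.prod_mem _ fun n _ => ?_
    rw [map_zpow, show -(((n : ℤ) + 1) * m) = ((n + 1 : ℕ) : ℤ) * -m by push_cast; ring]
    refine zpow_mem_comap_cubeDivExpand (ε := (ε : ZMod 9)) (by exact_mod_cast congrArg _ hε) ?_ _
    rw [Units.coe_map, oneSubUnit, IsUnit.unit_spec]
    simp [φ]
  apply (ZMod.intCast_eq_intCast_iff _ _ 9).mp
  rw [hcube, htrunc, hcast, hcast]
  simpa only [← map_pow, Units.coe_map, MonoidHom.coe_coe] using
    coeff_three_mul_pow_three_of_mem hF k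

theorem coeff_macMahon_three_chi_mod_nine_general (χ : ℤ) (a : ℕ) (ha3 : 3 ∣ a) :
    macMahonPowCoeff (-1) (3 * χ) a ≡ macMahonPowCoeff (-1) χ (a / 3) [ZMOD 9] := by
  obtain ⟨k, rfl⟩ := ha3
  rw [Nat.mul_div_cancel_left k three_pos]
  exact macMahonPowCoeff_three_mul_modEq (by norm_num) χ k

/-- For `χ ∈ ℤ` and `a` a positive integer divisible by 3, the coefficient of `t^a` in
`M(-t)^{3χ}` is congruent mod 9 to the coefficient of `t^{a/3}` in `M(-t)^{χ}`. -/
theorem coeff_macMahon_three_chi_mod_nine (χ : ℤ) (a : ℕ) (ha : 0 < a) (ha3 : 3 ∣ a) :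
    macMahonPowCoeff (-1) (3 * χ) a ≡ macMahonPowCoeff (-1) χ (a / 3) [ZMOD 9] :=
  coeff_macMahon_three_chi_mod_nine_general χ a ha3
end

section
/- Let χ be an integer and a a positive integer. Then (−1)^a · ∑_{k=1}^{a} (χ^k / k!) · ∑ (∏_{l=1}^{k} n_l) / (∏_{l=1}^{k} i_l), where the inner sum runs over all pairs of k-tuples (n_1,…,n_k), (i_1,…,i_k) of positive integers with ∑_{l=1}^{k} n_l i_l = a, equals the coefficient of t^a in the formal power series M(−t)^{χ}, both viewed as rational numbers. -/
open PowerSeries Finset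

/-- The sum over all pairs of `k`-tuples `(n_1,…,n_k)`, `(i_1,…,i_k)` of positive integers
with `∑ n_l i_l = a` of `(∏ n_l)/(∏ i_l)`.  The constraint forces every entry to lie in
`{1, …, a}`, so the sum may be taken over tuples with entries in `[1, a]`. -/
noncomputable def tupleSum (k a : ℕ) : ℚ :=
  ∑ f ∈ (Fintype.piFinset fun _ : Fin k => Finset.Icc 1 a ×ˢ Finset.Icc 1 a) |>.filter
      (fun f => ∑ l, (f l).1 * (f l).2 = a),
    (∏ l, ((f l).1 : ℚ)) / ∏ l, ((f l).2 : ℚ)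

open scoped Nat

/-!
Over `ℚ`, `M(t)^χ = ∏ₙ (1 - tⁿ)^(-nχ) = exp (χ L)` with
`L = -∑ₙ n log (1 - tⁿ) = ∑_{n, i ≥ 1} (n / i) t^(n i)`, so the coefficient of `t^a` is
`∑ₖ χᵏ / k! [t^a] Lᵏ`, and expanding `Lᵏ` as a product of `k` copies of `L` gives exactly the sum
over pairs of `k`-tuples with `∑ n_l i_l = a`. The substitution `t ↦ -t` contributes `(-1)^a`.
Formally, `exp (f + g) = exp f * exp g` and `exp (log f) = f` hold because both sides solve
`y' = y h` with the same constant term, and such solutions are unique in characteristic zero.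
-/

namespace PowerSeries

theorem eq_of_derivative_eq_mul {R : Type*} [CommRing R] [IsAddTorsionFree R] {f g h : R⟦X⟧}
    (hf : d⁄dX R f = f * h) (hg : d⁄dX R g = g * h) (h0 : constantCoeff f = constantCoeff g) :
    f = g := by
  rw [← sub_eq_zero]
  have hD : d⁄dX R (f - g) = (f - g) * h := by rw [map_sub, hf, hg, sub_mul]
  ext n
  induction n using Nat.strong_induction_on with
  | _ n ih =>
    cases n with
    | zero => simp [h0]
    | succ n =>
      have hn := congrArg (coeff n) hD
      rw [coeff_derivative, coeff_mul, Finset.sum_eq_zero fun p hp => by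
        rw [ih p.1 (Nat.antidiagonal.fst_lt hp), map_zero, zero_mul]] at hn
      rw [map_zero]
      have : (n + 1) • coeff (n + 1) (f - g) = 0 := by
        rw [nsmul_eq_mul, mul_comm]; exact_mod_cast hn
      exact (smul_eq_zero.mp this).resolve_left (Nat.succ_ne_zero n)

theorem coeff_subst_eq_sum_range {R : Type*} [CommRing R] {u : R⟦X⟧}
    (hu : constantCoeff u = 0) (f : R⟦X⟧) {m N : ℕ} (hm : m ≤ N) :
    coeff m (f.subst u) = ∑ d ∈ range (N + 1), coeff d f * coeff m (u ^ d) := by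
  rw [coeff_subst' (HasSubst.of_constantCoeff_zero' hu)]
  refine finsum_eq_sum_of_support_subset _ fun d hd => ?_
  by_contra hdN
  refine hd ?_
  dsimp only
  have hXu : X ^ d ∣ u ^ d := pow_dvd_pow_of_dvd (X_dvd_iff.mpr hu) d
  rw [smul_eq_mul, X_pow_dvd_iff.mp hXu m (by rw [mem_coe, mem_range] at hdN; omega), mul_zero]

theorem constantCoeff_subst_of_constantCoeff_zero {R : Type*} [CommRing R] {u : R⟦X⟧}
    (hu : constantCoeff u = 0) (f : R⟦X⟧) : constantCoeff (f.subst u) = constantCoeff f := by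
  simpa using coeff_subst_eq_sum_range hu f le_rfl (m := 0)

section ExpLog

variable {K : Type*} [Field K] [CharZero K]

noncomputable def expOf (f : K⟦X⟧) : K⟦X⟧ := (exp K).subst f

theorem constantCoeff_expOf {f : K⟦X⟧} (hf : constantCoeff f = 0) :
    constantCoeff (expOf f) = 1 := by
  rw [expOf, constantCoeff_subst_of_constantCoeff_zero hf, constantCoeff_exp]

theorem derivative_expOf {f : K⟦X⟧} (hf : constantCoeff f = 0) :
    d⁄dX K (expOf f) = expOf f * d⁄dX K f := by
  rw [expOf, derivative_subst (HasSubst.of_constantCoeff_zero' hf), derivative_exp]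

theorem expOf_add {f g : K⟦X⟧} (hf : constantCoeff f = 0) (hg : constantCoeff g = 0) :
    expOf (f + g) = expOf f * expOf g := by
  have hfg : constantCoeff (f + g) = 0 := by rw [map_add, hf, hg, add_zero]
  refine eq_of_derivative_eq_mul (h := d⁄dX K (f + g)) (derivative_expOf hfg) ?_ ?_
  · rw [Derivation.leibniz, derivative_expOf hf, derivative_expOf hg, map_add, smul_eq_mul,
      smul_eq_mul]
    ring
  · rw [map_mul, constantCoeff_expOf hf, constantCoeff_expOf hg, constantCoeff_expOf hfg,
      mul_one]

theorem expOf_zero : expOf (0 : K⟦X⟧) = 1 := by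
  refine eq_of_derivative_eq_mul (h := 0) ?_ (by simp) ?_
  · rw [derivative_expOf (map_zero _), map_zero, mul_zero]
  · rw [constantCoeff_expOf (map_zero _), map_one]

theorem expOf_sum {ι : Type*} (s : Finset ι) (f : ι → K⟦X⟧)
    (hf : ∀ i ∈ s, constantCoeff (f i) = 0) :
    expOf (∑ i ∈ s, f i) = ∏ i ∈ s, expOf (f i) := by
  classical
  induction s using Finset.induction_on with
  | empty => rw [sum_empty, prod_empty, expOf_zero]
  | insert i s hi ih =>
    have hs : constantCoeff (∑ j ∈ s, f j) = 0 := by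
      rw [map_sum]
      exact sum_eq_zero fun j hj => hf j (mem_insert_of_mem hj)
    rw [sum_insert hi, prod_insert hi, expOf_add (hf i (mem_insert_self i s)) hs,
      ih fun j hj => hf j (mem_insert_of_mem hj)]

theorem coeff_expOf {f : K⟦X⟧} (hf : constantCoeff f = 0) (n : ℕ) :
    coeff n (expOf f) = ∑ k ∈ range (n + 1), (k ! : K)⁻¹ * coeff n (f ^ k) := by
  simp [expOf, coeff_subst_eq_sum_range hf _ le_rfl, coeff_exp]

theorem one_add_X_mul_derivative_log : (1 + X) * d⁄dX K (log K) = 1 := by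
  have h := congrArg (rescale (-1 : K)) (mk_one_mul_one_sub_eq_one K)
  rw [map_mul, map_sub, map_one, rescale_X] at h
  have hmk : mk (fun n => algebraMap ℚ K ((-1) ^ n)) = rescale (-1 : K) (mk 1) := by
    ext n
    simp
  rw [deriv_log, hmk, mul_comm]
  simpa using h

theorem mul_derivative_logOf {f : K⟦X⟧} (hf : constantCoeff f = 1) :
    f * d⁄dX K (logOf f) = d⁄dX K f := by
  have hs : HasSubst (f - 1) :=
    HasSubst.of_constantCoeff_zero' (by rw [map_sub, hf, map_one, sub_self])
  have h := congrArg (substAlgHom hs) (one_add_X_mul_derivative_log (K := K))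
  rw [map_mul, map_add, map_one, substAlgHom_X, coe_substAlgHom, add_sub_cancel] at h
  rw [logOf_eq, derivative_subst hs, ← mul_assoc, h, one_mul, map_sub,
    Derivation.map_one_eq_zero, sub_zero]

theorem expOf_logOf {f : K⟦X⟧} (hf : constantCoeff f = 1) : expOf (logOf f) = f := by
  have hl := constantCoeff_logOf hf
  refine eq_of_derivative_eq_mul (derivative_expOf hl) (mul_derivative_logOf hf).symm ?_
  rw [constantCoeff_expOf hl, hf]

theorem val_zpow_eq_expOf (U : K⟦X⟧ˣ) (hU : constantCoeff (U : K⟦X⟧) = 1) (k : ℤ) :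
    ((U ^ k : K⟦X⟧ˣ) : K⟦X⟧) = expOf (k • logOf (U : K⟦X⟧)) := by
  have hl := constantCoeff_logOf hU
  have hkl : ∀ k : ℤ, constantCoeff (k • logOf (U : K⟦X⟧)) = 0 := fun k => by
    rw [map_zsmul, hl, smul_zero]
  induction k using Int.induction_on with
  | zero => rw [zpow_zero, zero_smul, expOf_zero, Units.val_one]
  | succ k ih =>
    rw [zpow_add_one, Units.val_mul, ih, add_smul, one_smul, expOf_add (hkl k) hl, expOf_logOf hU]
  | pred k ih =>
    have hinv : ((U⁻¹ : K⟦X⟧ˣ) : K⟦X⟧) = expOf (-logOf (U : K⟦X⟧)) := by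
      refine Units.inv_eq_of_mul_eq_one_right ?_
      calc (U : K⟦X⟧) * expOf (-logOf (U : K⟦X⟧))
          = expOf (logOf (U : K⟦X⟧)) * expOf (-logOf (U : K⟦X⟧)) := by rw [expOf_logOf hU]
        _ = 1 := by
          rw [← expOf_add hl (by rw [map_neg, hl, neg_zero]), add_neg_cancel, expOf_zero]
    rw [zpow_sub_one, Units.val_mul, ih, hinv, ← expOf_add (hkl _) (by rw [map_neg, hl, neg_zero]),
      sub_smul, one_smul, sub_eq_add_neg]

theorem val_prod_zpow_eq_expOf {ι : Type*} (s : Finset ι) (U : ι → K⟦X⟧ˣ)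
    (hU : ∀ i ∈ s, constantCoeff (U i : K⟦X⟧) = 1) (k : ι → ℤ) :
    ((∏ i ∈ s, U i ^ k i : K⟦X⟧ˣ) : K⟦X⟧) = expOf (∑ i ∈ s, k i • logOf (U i : K⟦X⟧)) := by
  rw [Units.coe_prod,
    expOf_sum _ _ fun i hi => by rw [map_zsmul, constantCoeff_logOf (hU i hi), smul_zero]]
  exact prod_congr rfl fun i hi => val_zpow_eq_expOf (U i) (hU i hi) (k i)

theorem X_pow_dvd_logOf_one_sub_add_sum {u : K⟦X⟧} (hu : constantCoeff u = 0) (N : ℕ) :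
    X ^ (N + 1) ∣ logOf (1 - u) + ∑ i ∈ range (N + 1), C (i : K)⁻¹ * u ^ i := by
  have hnu : constantCoeff (-u) = 0 := by rw [map_neg, hu, neg_zero]
  refine X_pow_dvd_iff.mpr fun m hm => ?_
  rw [map_add, logOf_eq, sub_sub_cancel_left,
    coeff_subst_eq_sum_range hnu _ (Nat.lt_succ_iff.mp hm), map_sum, ← sum_add_distrib]
  refine sum_eq_zero fun d _ => ?_
  rcases d with _ | d
  · simp
  · have hsign : (-1 : K) ^ (d + 1 + 1) * (-1) ^ (d + 1) = -1 := by
      rw [← pow_add]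
      exact Odd.neg_one_pow ⟨d + 1, by ring⟩
    rw [neg_pow, coeff_log, if_neg d.succ_ne_zero, coeff_C_mul,
      show (-1 : K⟦X⟧) ^ (d + 1) = C ((-1) ^ (d + 1)) by simp, coeff_C_mul]
    push_cast
    linear_combination ((d : K) + 1)⁻¹ * coeff m (u ^ (d + 1)) * hsign

end ExpLog

end PowerSeries

-- A truncation of `∑_{n, i ≥ 1} (n / i) t^(n i)`: the terms with `p.1 = 0` or `p.2 = 0` vanish,
-- the latter because `x / 0 = 0`.
noncomputable def tupleSeries (a : ℕ) : ℚ⟦X⟧ :=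
  ∑ p ∈ range (a + 1) ×ˢ range (a + 1), C ((p.1 : ℚ) / p.2) * X ^ (p.1 * p.2)

theorem coeff_tupleSeries_pow (k a : ℕ) : coeff a (tupleSeries a ^ k) = tupleSum k a := by
  classical
  rw [← Fin.prod_const k (tupleSeries a), tupleSeries, prod_univ_sum, map_sum]
  simp_rw [prod_mul_distrib, ← map_prod, prod_pow_eq_pow_sum, coeff_C_mul_X_pow]
  rw [← sum_filter, tupleSum]
  simp_rw [prod_div_distrib]
  symm
  refine sum_subset (fun f hf => ?_) (fun f hf hf' => ?_)
  · simp only [mem_filter, Fintype.mem_piFinset, mem_product, mem_Icc, mem_range] at hf ⊢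
    exact ⟨fun l => by have := hf.1 l; omega, hf.2.symm⟩
  · simp only [mem_filter, Fintype.mem_piFinset, mem_product, mem_Icc, mem_range] at hf hf'
    obtain ⟨l, hl⟩ : ∃ l, (f l).1 = 0 ∨ (f l).2 = 0 := by
      by_contra! h
      exact hf' ⟨fun l => by have := hf.1 l; have := h l; omega, hf.2.symm⟩
    rw [div_eq_zero_iff, prod_eq_zero_iff, prod_eq_zero_iff]
    exact hl.imp (fun h => ⟨l, mem_univ l, by simp [h]⟩) (fun h => ⟨l, mem_univ l, by simp [h]⟩)

theorem tupleSum_zero_left {a : ℕ} (ha : 0 < a) : tupleSum 0 a = 0 := by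
  simp [tupleSum, ha.ne]

noncomputable def macMahonPowLog (m : ℤ) (a : ℕ) : ℚ⟦X⟧ :=
  ∑ n ∈ range a, (-((n + 1 : ℤ) * m)) • logOf (1 - X ^ (n + 1))

theorem constantCoeff_macMahonPowLog (m : ℤ) (a : ℕ) :
    constantCoeff (macMahonPowLog m a) = 0 := by
  simp [macMahonPowLog, constantCoeff_logOf]

theorem macMahonPowCoeff_eq_pow_mul (ε m : ℤ) (a : ℕ) :
    macMahonPowCoeff ε m a = ε ^ a * macMahonPowCoeff 1 m a := by
  have hU : ∀ n, oneSubUnit ε n = Units.map (rescale ε : ℤ⟦X⟧ →* ℤ⟦X⟧) (oneSubUnit 1 n) :=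
    fun n => by ext1; simp [oneSubUnit, rescale_X]
  simp only [macMahonPowCoeff, hU, ← map_zpow, ← map_prod, Units.coe_map, MonoidHom.coe_coe,
    coeff_rescale]

theorem cast_macMahonPowCoeff_one (m : ℤ) (a : ℕ) :
    (macMahonPowCoeff 1 m a : ℚ) = coeff a (expOf (macMahonPowLog m a)) := by
  set toRat : ℤ⟦X⟧ →+* ℚ⟦X⟧ := map (Int.castRingHom ℚ)
  have hU : ∀ n, ((Units.map toRat.toMonoidHom (oneSubUnit 1 n) : ℚ⟦X⟧ˣ) : ℚ⟦X⟧) =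
      1 - X ^ (n + 1) :=
    fun n => by simp [toRat, oneSubUnit]
  have hcast : (macMahonPowCoeff 1 m a : ℚ) = coeff a ((∏ n ∈ range a,
      Units.map toRat.toMonoidHom (oneSubUnit 1 n) ^ (-((n + 1 : ℤ) * m)) : ℚ⟦X⟧ˣ) : ℚ⟦X⟧) := by
    simp only [macMahonPowCoeff, ← map_zpow, ← map_prod, Units.coe_map,
      RingHom.toMonoidHom_eq_coe, MonoidHom.coe_coe, toRat, coeff_map, eq_intCast]
  rw [hcast, val_prod_zpow_eq_expOf _ _ fun n _ => by rw [hU]; simp, macMahonPowLog]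
  simp_rw [hU]
  -- the two sides differ only in the instance path of the `ℤ`-action on `ℚ⟦X⟧`
  rfl

theorem C_mul_tupleSeries (m : ℤ) (a : ℕ) :
    C (m : ℚ) * tupleSeries a =
      ∑ n ∈ range a, ((n + 1 : ℤ) * m) • ∑ i ∈ range (a + 1), C (i : ℚ)⁻¹ * (X ^ (n + 1)) ^ i := by
  rw [tupleSeries, sum_product, sum_range_succ', mul_add, mul_sum]
  simp only [Nat.cast_zero, zero_div, map_zero, zero_mul, sum_const_zero, mul_zero, add_zero]
  refine sum_congr rfl fun n _ => ?_
  rw [mul_sum, smul_sum]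
  refine sum_congr rfl fun i _ => ?_
  rw [zsmul_eq_mul, ← pow_mul, ← mul_assoc, ← mul_assoc, ← map_intCast (C : ℚ →+* ℚ⟦X⟧),
    ← map_mul, ← map_mul]
  congr 2
  push_cast
  ring

theorem X_pow_dvd_macMahonPowLog_sub (m : ℤ) (a : ℕ) :
    X ^ (a + 1) ∣ macMahonPowLog m a - C (m : ℚ) * tupleSeries a := by
  have hsplit : macMahonPowLog m a - C (m : ℚ) * tupleSeries a = ∑ n ∈ range a,
      (-((n + 1 : ℤ) * m)) •
        (logOf (1 - X ^ (n + 1)) + ∑ i ∈ range (a + 1), C (i : ℚ)⁻¹ * (X ^ (n + 1)) ^ i) := by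
    rw [C_mul_tupleSeries, macMahonPowLog, ← sum_sub_distrib]
    simp_rw [smul_add, neg_smul, sub_eq_add_neg]
  rw [hsplit]
  refine dvd_sum fun n _ => ?_
  rw [zsmul_eq_mul]
  exact (X_pow_dvd_logOf_one_sub_add_sum (by simp) a).mul_left _

theorem coeff_macMahonPowLog_pow (m : ℤ) (a k : ℕ) :
    coeff a (macMahonPowLog m a ^ k) = (m : ℚ) ^ k * tupleSum k a := by
  have hk := (X_pow_dvd_macMahonPowLog_sub m a).trans (sub_dvd_pow_sub_pow _ _ k)
  have hcoeff := X_pow_dvd_iff.mp hk a (Nat.lt_succ_self a)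
  rwa [map_sub, sub_eq_zero, mul_pow, ← map_pow, coeff_C_mul, coeff_tupleSeries_pow] at hcoeff

/-- For `χ ∈ ℤ` and `a ≥ 1`,
`(-1)^a ∑_{k=1}^{a} (χ^k/k!) ∑_{∑ n_l i_l = a} (∏ n_l)/(∏ i_l)` equals the coefficient of
`t^a` in `M(-t)^χ`, as rational numbers.  (Tuples with `∑ n_l i_l = a` require `k ≤ a`,
so the outer sum may be truncated at `k = a`.) -/
theorem neg_one_pow_mul_sum_eq_coeff_macMahon (χ : ℤ) (a : ℕ) (ha : 0 < a) :
    (-1 : ℚ) ^ a *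
        ∑ k ∈ Finset.Icc 1 a, (χ : ℚ) ^ k / (Nat.factorial k : ℚ) * tupleSum k a =
      (macMahonPowCoeff (-1) χ a : ℚ) := by
  rw [macMahonPowCoeff_eq_pow_mul, Int.cast_mul, Int.cast_pow, cast_macMahonPowCoeff_one,
    coeff_expOf (constantCoeff_macMahonPowLog χ a), range_eq_Ico,
    sum_eq_sum_Ico_succ_bot (Nat.succ_pos a)]
  simp only [coeff_macMahonPowLog_pow, tupleSum_zero_left ha, mul_zero, zero_add, Int.cast_neg,
    Int.cast_one, Nat.succ_eq_add_one, Ico_add_one_right_eq_Icc, mul_sum]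
  refine sum_congr rfl fun k _ => ?_
  ring
end

section
/- For every positive integer s, the sum over all ordered partitions q = (q_1,…,q_k) of s of (−1)^{k} / (q_1! · q_2! ⋯ q_k!) equals (−1)^s / s!, as rational numbers. -/
/-!
Splitting off the first block of a composition shows that the sums
`a n = ∑_{q ⊨ n} ∏ (-1 / q_l!)` satisfy `a 0 = 1` and `a (n + 1) = -∑_{i + j = n} a j / (i + 1)!`.
The sequence `(-1)^n / n!` satisfies the same recursion because `e^X e^{-X} = 1`; in generating
function terms, `∑ a n X^n = 1 / (1 + (e^X - 1)) = e^{-X}`.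
-/

open Finset Nat PowerSeries

theorem List.prod_map_neg_inv {ι K : Type*} [Field K] (l : List ι) (g : ι → K) :
    (l.map fun x => -(g x)⁻¹).prod = (-1) ^ l.length / (l.map g).prod := by
  induction l with
  | nil => simp
  | cons x l ih =>
    simp only [List.map_cons, List.prod_cons, List.length_cons, ih, pow_succ]
    ring

theorem sum_antidiagonal_neg_inv_factorial_mul_neg_one_pow_div_factorial
    {K : Type*} [Field K] [CharZero K] (n : ℕ) :
    ∑ p ∈ antidiagonal n, -((p.1 + 1)! : K)⁻¹ * ((-1) ^ p.2 / p.2 !) =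
      (-1) ^ (n + 1) / (n + 1)! := by
  have h := congrArg (coeff (n + 1)) (exp_mul_exp_neg_eq_one (A := K))
  rw [coeff_mul, Nat.sum_antidiagonal_succ, coeff_one, if_neg n.succ_ne_zero] at h
  simp only [evalNegHom, coeff_rescale, coeff_exp, one_div, map_inv₀, map_natCast,
    factorial_zero, cast_one, inv_one, map_one, one_mul] at h
  simp only [neg_mul, sum_neg_distrib, div_eq_mul_inv]
  linear_combination -h

namespace Composition

def firstBlockEquiv (n : ℕ) : Composition (n + 1) ≃ Σ i : Fin (n + 1), Composition (n - i) where
  toFun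
    | ⟨a :: l, hpos, hsum⟩ =>
      have ha : 0 < a := hpos List.mem_cons_self
      have hsum : a + l.sum = n + 1 := by simpa using hsum
      ⟨⟨a - 1, by omega⟩, ⟨l, fun hi => hpos (List.mem_cons_of_mem a hi), by
        show l.sum = n - (a - 1); omega⟩⟩
    | ⟨[], _, hsum⟩ => absurd hsum (by simp)
  invFun p :=
    ⟨(p.1 + 1) :: p.2.blocks, by
      rintro i (_ | ⟨_, hi⟩)
      exacts [Nat.succ_pos _, p.2.blocks_pos hi], by
      have := p.1.isLt
      simp only [List.sum_cons, p.2.blocks_sum]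
      omega⟩
  left_inv := by
    rintro ⟨_ | ⟨a, l⟩, hpos, hsum⟩
    · simp at hsum
    · have : 0 < a := hpos List.mem_cons_self
      ext1
      simp only [List.cons.injEq, and_true]
      omega
  right_inv _ := rfl

theorem sum_prod_map_blocks_succ {R : Type*} [CommSemiring R] (f : ℕ → R) (n : ℕ) :
    ∑ c : Composition (n + 1), (c.blocks.map f).prod =
      ∑ p ∈ antidiagonal n, f (p.1 + 1) * ∑ c : Composition p.2, (c.blocks.map f).prod := by
  rw [← (firstBlockEquiv n).symm.sum_comp, Fintype.sum_sigma,
    Nat.sum_antidiagonal_eq_sum_range_succ_mk, ← Fin.sum_univ_eq_sum_range]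
  simp [firstBlockEquiv, mul_sum]

theorem sum_prod_map_neg_inv_factorial_blocks {K : Type*} [Field K] [CharZero K] (n : ℕ) :
    ∑ c : Composition n, (c.blocks.map fun i => -(i ! : K)⁻¹).prod = (-1) ^ n / n ! := by
  induction n using Nat.strong_induction_on with
  | _ n ih =>
    cases n with
    | zero => simp [fun c : Composition 0 => c.blocks_eq_nil.2 rfl, composition_card]
    | succ n =>
      rw [sum_prod_map_blocks_succ,
        ← sum_antidiagonal_neg_inv_factorial_mul_neg_one_pow_div_factorial]
      refine sum_congr rfl fun p hp => ?_
      rw [ih p.2 (by have := mem_antidiagonal.1 hp; omega)]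

end Composition

theorem sum_compositions_neg_one_pow_div_factorials_general (s : ℕ) :
    ∑ q : Composition s,
        (-1 : ℚ) ^ q.length / (q.blocks.map fun x => (Nat.factorial x : ℚ)).prod =
      (-1 : ℚ) ^ s / (Nat.factorial s : ℚ) := by
  simpa only [List.prod_map_neg_inv] using Composition.sum_prod_map_neg_inv_factorial_blocks s

/-- For every positive integer `s`, the sum over all ordered partitions (compositions)
`q = (q_1,…,q_k)` of `s` of `(-1)^k / (q_1! ⋯ q_k!)` equals `(-1)^s / s!`, as rational
numbers. -/
theorem sum_compositions_neg_one_pow_div_factorials (s : ℕ) (hs : 0 < s) :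
    ∑ q : Composition s,
        (-1 : ℚ) ^ q.length / (q.blocks.map fun x => (Nat.factorial x : ℚ)).prod =
      (-1 : ℚ) ^ s / (Nat.factorial s : ℚ) :=
  sum_compositions_neg_one_pow_div_factorials_general s
end

section
/- For vectors ξ = (a,r), η = (a',r') in ℤ², let ⟨ξ,η⟩ = a r' − r a', and set B(ξ,η) = (−1)^{⟨ξ,η⟩}·⟨ξ,η⟩ ∈ ℤ. Then for all ξ, η, ζ ∈ ℤ² the Jacobi relation B(η,ζ)·B(ξ, η+ζ) + B(ζ,ξ)·B(η, ζ+ξ) + B(ξ,η)·B(ζ, ξ+η) = 0 holds; consequently the bracket [e_ξ, e_η] = B(ξ,η) e_{ξ+η} on the free module with basis indexed by ℤ² satisfies the Jacobi identity. -/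
/-- The standard antisymmetric bilinear form on `ℤ²`: `⟨(a,r),(a',r')⟩ = a r' - r a'`. -/
def symplPair (ξ η : ℤ × ℤ) : ℤ := ξ.1 * η.2 - ξ.2 * η.1

/-- The structure constants `B(ξ,η) = (-1)^{⟨ξ,η⟩} ⟨ξ,η⟩`. -/
def structConst (ξ η : ℤ × ℤ) : ℤ := (symplPair ξ η).negOnePow * symplPair ξ η

/-- The bracket `[e_ξ, e_η] = B(ξ,η) e_{ξ+η}`, extended bilinearly to the free `ℤ`-module
with basis indexed by `ℤ²` (elements being finitely supported functions `ℤ² → ℤ`, with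
`e_ξ = single ξ 1`). -/
noncomputable def bracket (x y : (ℤ × ℤ) →₀ ℤ) : (ℤ × ℤ) →₀ ℤ :=
  x.sum fun ξ cξ => y.sum fun η cη =>
    Finsupp.single (ξ + η) (cξ * cη * structConst ξ η)

/-! With `p, q, r` the pairings `⟨η,ζ⟩, ⟨ζ,ξ⟩, ⟨ξ,η⟩`, the three terms of the Jacobi relation
are `(-1)^p p · (-1)^(r-q) (r-q)` and its cyclic shifts. Every sign equals `(-1)^(p+q+r)`, and
`p(r-q) + q(p-r) + r(q-p) = 0`. The Jacobi identity of the bracket then follows on basis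
vectors, and in general by additivity in each argument. -/

theorem Int.negOnePow_mul_self_cyclic_sum (p q r : ℤ) :
    p.negOnePow * p * ((r - q).negOnePow * (r - q)) +
        q.negOnePow * q * ((p - r).negOnePow * (p - r)) +
        r.negOnePow * r * ((q - p).negOnePow * (q - p)) = 0 := by
  simp only [Int.negOnePow_sub, Units.val_mul]
  ring

theorem symplPair_add_right (ξ η ζ : ℤ × ℤ) :
    symplPair ξ (η + ζ) = symplPair ξ η + symplPair ξ ζ := by
  simp only [symplPair, Prod.fst_add, Prod.snd_add]
  ring

theorem symplPair_comm (ξ η : ℤ × ℤ) : symplPair ξ η = -symplPair η ξ := by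
  simp only [symplPair]
  ring

theorem structConst_cyclic_sum (ξ η ζ : ℤ × ℤ) :
    structConst η ζ * structConst ξ (η + ζ) +
      structConst ζ ξ * structConst η (ζ + ξ) +
      structConst ξ η * structConst ζ (ξ + η) = 0 := by
  simp only [structConst, symplPair_add_right, symplPair_comm ξ ζ, symplPair_comm η ξ,
    symplPair_comm ζ η, ← sub_eq_add_neg]
  exact Int.negOnePow_mul_self_cyclic_sum _ _ _

section Bracket

open Finsupp

theorem bracket_single_single (ξ η : ℤ × ℤ) (a b : ℤ) :
    bracket (single ξ a) (single η b) = single (ξ + η) (a * b * structConst ξ η) := by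
  simp [bracket]

theorem bracket_add_left (x x' y : (ℤ × ℤ) →₀ ℤ) :
    bracket (x + x') y = bracket x y + bracket x' y :=
  sum_add_index' (by simp) fun _ _ _ => by simp only [add_mul, single_add, sum_add]

theorem bracket_add_right (x y y' : (ℤ × ℤ) →₀ ℤ) :
    bracket x (y + y') = bracket x y + bracket x y' := by
  simp only [bracket, ← sum_add]
  exact sum_congr fun _ _ => sum_add_index' (by simp) fun _ _ _ => by
    simp only [mul_add, add_mul, single_add]

theorem bracket_zero_left (y : (ℤ × ℤ) →₀ ℤ) : bracket 0 y = 0 := sum_zero_index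

theorem bracket_zero_right (x : (ℤ × ℤ) →₀ ℤ) : bracket x 0 = 0 := by
  simp [bracket]

noncomputable def jacobiator (x y z : (ℤ × ℤ) →₀ ℤ) : (ℤ × ℤ) →₀ ℤ :=
  bracket x (bracket y z) + bracket y (bracket z x) + bracket z (bracket x y)

theorem jacobiator_rotate (x y z : (ℤ × ℤ) →₀ ℤ) : jacobiator x y z = jacobiator y z x := by
  simp only [jacobiator]
  abel

theorem jacobiator_zero_left (y z : (ℤ × ℤ) →₀ ℤ) : jacobiator 0 y z = 0 := by
  simp only [jacobiator, bracket_zero_left, bracket_zero_right, add_zero]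

theorem jacobiator_add_left (x x' y z : (ℤ × ℤ) →₀ ℤ) :
    jacobiator (x + x') y z = jacobiator x y z + jacobiator x' y z := by
  simp only [jacobiator, bracket_add_left, bracket_add_right]
  abel

theorem jacobiator_single (ξ η ζ : ℤ × ℤ) (a b c : ℤ) :
    jacobiator (single ξ a) (single η b) (single ζ c) = 0 := by
  simp only [jacobiator, bracket_single_single, ← single_add,
    show η + (ζ + ξ) = ξ + (η + ζ) by abel, show ζ + (ξ + η) = ξ + (η + ζ) by abel]
  rw [← single_zero (ξ + (η + ζ))]
  congr 1
  linear_combination a * b * c * structConst_cyclic_sum ξ η ζ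

theorem jacobiator_eq_zero_of_forall_single {y z : (ℤ × ℤ) →₀ ℤ}
    (h : ∀ ξ a, jacobiator (single ξ a) y z = 0) (x : (ℤ × ℤ) →₀ ℤ) : jacobiator x y z = 0 :=
  x.induction_linear (jacobiator_zero_left y z)
    (fun _ _ hx hx' => by rw [jacobiator_add_left, hx, hx', add_zero]) h

theorem jacobiator_eq_zero (x y z : (ℤ × ℤ) →₀ ℤ) : jacobiator x y z = 0 := by
  refine jacobiator_eq_zero_of_forall_single (fun ξ a => ?_) x
  rw [jacobiator_rotate]
  refine jacobiator_eq_zero_of_forall_single (fun η b => ?_) y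
  rw [jacobiator_rotate]
  exact jacobiator_eq_zero_of_forall_single (fun ζ c => jacobiator_single ζ ξ η c a b) z

end Bracket

/-- The Jacobi relation for the structure constants
`B(ξ,η) = (-1)^{⟨ξ,η⟩} ⟨ξ,η⟩` on `ℤ²`:
`B(η,ζ)B(ξ,η+ζ) + B(ζ,ξ)B(η,ζ+ξ) + B(ξ,η)B(ζ,ξ+η) = 0`; consequently the bracket
`[e_ξ, e_η] = B(ξ,η) e_{ξ+η}` on the free module with basis indexed by `ℤ²` satisfies
the Jacobi identity. -/
theorem structConst_jacobi :
    (∀ ξ η ζ : ℤ × ℤ,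
        structConst η ζ * structConst ξ (η + ζ) +
            structConst ζ ξ * structConst η (ζ + ξ) +
            structConst ξ η * structConst ζ (ξ + η) = 0) ∧
      (∀ x y z : (ℤ × ℤ) →₀ ℤ,
        bracket x (bracket y z) + bracket y (bracket z x) + bracket z (bracket x y) = 0) :=
  ⟨structConst_cyclic_sum, jacobiator_eq_zero⟩
end

section
/- Let χ be an integer, i a positive even integer, and ξ an odd positive integer. Then the generalized binomial coefficient C(2iχ − 1 + ξ, ξ) is divisible by 4. -/
/-!
With `n = 2iχ`, the coefficient `C(n - 1 + ξ, ξ)` is the multiset coefficient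
`multichoose n ξ = n(n+1)⋯(n+ξ-1)/ξ!`, and `ξ · multichoose n ξ = n · multichoose (n+1) (ξ-1)`.
Since `4 ∣ n` and `ξ` is odd, hence coprime to `4`, it follows that `4 ∣ multichoose n ξ`.
-/

namespace Ring

variable {R : Type*} [CommRing R] [BinomialRing R]

open Polynomial in
theorem succ_nsmul_multichoose_succ (r : R) (k : ℕ) :
    (k + 1) • multichoose r (k + 1) = r * multichoose (r + 1) k := by
  have := BinomialRing.toIsAddTorsionFree (R := R)
  rw [← nsmul_right_inj (Nat.factorial_ne_zero k), smul_smul, mul_comm, ← Nat.factorial_succ,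
    ← mul_smul_comm, factorial_nsmul_multichoose_eq_ascPochhammer,
    factorial_nsmul_multichoose_eq_ascPochhammer, ascPochhammer_succ_left, smeval_mul, smeval_X,
    smeval_comp, smeval_add, smeval_X, smeval_one, npow_one, npow_zero, one_smul]

theorem dvd_multichoose_succ_of_dvd {a r : R} {k : ℕ} (hcoprime : IsCoprime a (k + 1))
    (har : a ∣ r) : a ∣ multichoose r (k + 1) := by
  have : a ∣ (k + 1) * multichoose r (k + 1) := by
    rw [← Nat.cast_succ, ← nsmul_eq_mul, succ_nsmul_multichoose_succ]
    exact har.mul_right _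
  exact hcoprime.dvd_of_dvd_mul_left this

end Ring

theorem four_dvd_choose_odd_general (χ : ℤ) (i ξ : ℕ) (hieven : 2 ∣ i)
    (hodd : Odd ξ) :
    4 ∣ Ring.choose (2 * (i : ℤ) * χ - 1 + (ξ : ℤ)) ξ := by
  obtain ⟨j, rfl⟩ := hieven
  obtain ⟨s, rfl⟩ := hodd
  have hcoprime : IsCoprime (4 : ℤ) (2 * s + 1) := by
    rw [show (4 : ℤ) = 2 ^ 2 by norm_num]
    exact (Int.isCoprime_two_left.mpr ⟨s, rfl⟩).pow_left
  have h4 : (4 : ℤ) ∣ 2 * (2 * j : ℕ) * χ := ⟨j * χ, by push_cast; ring⟩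
  have := Ring.dvd_multichoose_succ_of_dvd (k := 2 * s) (by exact_mod_cast hcoprime) h4
  rwa [Ring.multichoose_eq, add_sub_right_comm] at this

/-- For `χ ∈ ℤ`, `i` a positive even integer and `ξ` an odd positive integer, the
generalized binomial coefficient `C(2iχ - 1 + ξ, ξ)` is divisible by `4`. -/
theorem four_dvd_choose_odd (χ : ℤ) (i ξ : ℕ) (hi : 0 < i) (hieven : 2 ∣ i)
    (hξ : 0 < ξ) (hodd : Odd ξ) :
    4 ∣ Ring.choose (2 * (i : ℤ) * χ - 1 + (ξ : ℤ)) ξ :=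
  four_dvd_choose_odd_general χ i ξ hieven hodd
end

section
/- Let χ be an integer, i a positive integer, and ξ a nonnegative even integer. Then C(2iχ − 1 + ξ, ξ) ≡ (−1)^{ξ/2} · C(iχ − 1 + ξ/2, ξ/2) modulo 4. -/
/-!
Put `M = iχ + ξ/2 - 1`, so that the claim reads `C(2M+1, 2t) ≡ (-1)^t C(M, t) (mod 4)` with
`t = ξ/2`. This congruence, together with `C(2M+1, 2t+1) ≡ C(M, t) (mod 2)`, is proved by
induction on `t`: at `M = 0` both sides vanish, and by the two-step Pascal rule
`C(N+2, k+2) = C(N, k) + 2 C(N, k+1) + C(N, k+2)` the increments in `M` of the two sides of the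
congruences for `t + 1` are congruent by the congruences for `t`.
-/

theorem Ring.choose_add_two_add_two {R : Type*} [NonAssocRing R] [Pow R ℕ] [NatPowAssoc R]
    [BinomialRing R] (r : R) (k : ℕ) :
    Ring.choose (r + 2) (k + 2) =
      Ring.choose r k + 2 * Ring.choose r (k + 1) + Ring.choose r (k + 2) := by
  rw [← one_add_one_eq_two, ← add_assoc, Ring.choose_succ_succ, Ring.choose_succ_succ,
    Ring.choose_succ_succ, add_mul, one_mul]
  abel

theorem Ring.choose_one_add_two {R : Type*} [NonAssocRing R] [Pow R ℕ] [NatPowAssoc R]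
    [BinomialRing R] (k : ℕ) : Ring.choose (1 : R) (k + 2) = 0 := by
  rw [← zero_add (1 : R), Ring.choose_succ_succ, Ring.choose_zero_succ, Ring.choose_zero_succ,
    add_zero]

theorem Int.ModEq.of_modEq_sub_succ {n : ℤ} {f g : ℤ → ℤ} (h₀ : f 0 ≡ g 0 [ZMOD n])
    (hstep : ∀ m, f (m + 1) - f m ≡ g (m + 1) - g m [ZMOD n]) (m : ℤ) :
    f m ≡ g m [ZMOD n] := by
  induction m using Int.induction_on with
  | zero => exact h₀
  | succ k ih => simpa using (hstep k).add ih
  | pred k ih =>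
    have h := hstep (-(k : ℤ) - 1)
    rw [sub_add_cancel] at h
    simpa using ih.sub h

theorem Int.choose_two_mul_add_one_succ_sub (M : ℤ) (k : ℕ) :
    Ring.choose (2 * (M + 1) + 1) (k + 2) - Ring.choose (2 * M + 1) (k + 2) =
      Ring.choose (2 * M + 1) k + 2 * Ring.choose (2 * M + 1) (k + 1) := by
  rw [show 2 * (M + 1) + 1 = 2 * M + 1 + 2 by ring, Ring.choose_add_two_add_two]
  ring

theorem Ring.choose_succ_sub_choose_succ {R : Type*} [NonAssocRing R] [Pow R ℕ] [NatPowAssoc R]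
    [BinomialRing R] (r : R) (k : ℕ) :
    Ring.choose (r + 1) (k + 1) - Ring.choose r (k + 1) = Ring.choose r k := by
  rw [Ring.choose_succ_succ, add_sub_cancel_right]

theorem Int.choose_two_mul_add_one_odd_modEq_two (t : ℕ) (M : ℤ) :
    Ring.choose (2 * M + 1) (2 * t + 1) ≡ Ring.choose M t [ZMOD 2] := by
  induction t generalizing M with
  | zero =>
    simp only [Ring.choose_one_right, Ring.choose_zero_right, mul_zero, zero_add]
    exact (Int.modEq_iff_dvd.mpr ⟨M, by ring⟩).symm
  | succ t ih =>
    rw [show 2 * (t + 1) + 1 = 2 * t + 1 + 2 by ring]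
    refine Int.ModEq.of_modEq_sub_succ (f := fun M ↦ Ring.choose (2 * M + 1) (2 * t + 1 + 2))
      (g := fun M ↦ Ring.choose M (t + 1)) ?_ (fun m ↦ ?_) M
    · simp [Ring.choose_one_add_two]
    · simp only [Int.choose_two_mul_add_one_succ_sub, Ring.choose_succ_sub_choose_succ]
      calc _ ≡ Ring.choose (2 * m + 1) (2 * t + 1) + 0 [ZMOD 2] :=
            Int.ModEq.add_left _ (Int.modEq_zero_iff_dvd.mpr (dvd_mul_right _ _))
        _ ≡ Ring.choose m t [ZMOD 2] := by simpa using ih m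

theorem Int.neg_one_pow_add_two_modEq_four (t : ℕ) : (-1) ^ t + 2 ≡ (-1) ^ (t + 1) [ZMOD 4] := by
  rcases Nat.even_or_odd t with ht | ht
  · rw [ht.neg_one_pow, ht.add_one.neg_one_pow]; decide
  · rw [ht.neg_one_pow, ht.add_one.neg_one_pow]; decide

theorem Int.choose_two_mul_add_one_even_modEq_four (t : ℕ) (M : ℤ) :
    Ring.choose (2 * M + 1) (2 * t) ≡ (-1) ^ t * Ring.choose M t [ZMOD 4] := by
  induction t generalizing M with
  | zero => simp
  | succ t ih =>
    rw [show 2 * (t + 1) = 2 * t + 2 by ring]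
    refine Int.ModEq.of_modEq_sub_succ (f := fun M ↦ Ring.choose (2 * M + 1) (2 * t + 2))
      (g := fun M ↦ (-1) ^ (t + 1) * Ring.choose M (t + 1)) ?_ (fun m ↦ ?_) M
    · simp [Ring.choose_one_add_two]
    · simp only [Int.choose_two_mul_add_one_succ_sub, ← mul_sub, Ring.choose_succ_sub_choose_succ]
      have hodd : 2 * Ring.choose (2 * m + 1) (2 * t + 1) ≡ 2 * Ring.choose m t [ZMOD 4] :=
        (Int.choose_two_mul_add_one_odd_modEq_two t m).mul_left' (c := 2)
      calc _ ≡ (-1) ^ t * Ring.choose m t + 2 * Ring.choose m t [ZMOD 4] := (ih m).add hodd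
        _ = ((-1) ^ t + 2) * Ring.choose m t := by ring
        _ ≡ (-1) ^ (t + 1) * Ring.choose m t [ZMOD 4] :=
          (Int.neg_one_pow_add_two_modEq_four t).mul_right _

theorem choose_even_mod_four_general (χ : ℤ) (i ξ : ℕ) (heven : 2 ∣ ξ) :
    Ring.choose (2 * (i : ℤ) * χ - 1 + (ξ : ℤ)) ξ ≡
      (-1) ^ (ξ / 2) * Ring.choose ((i : ℤ) * χ - 1 + ((ξ / 2 : ℕ) : ℤ)) (ξ / 2) [ZMOD 4] := by
  obtain ⟨t, rfl⟩ := heven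
  rw [Nat.mul_div_cancel_left t two_pos]
  convert Int.choose_two_mul_add_one_even_modEq_four t ((i : ℤ) * χ - 1 + t) using 2
  push_cast
  ring

/-- For `χ ∈ ℤ`, `i ≥ 1` and `ξ` a nonnegative even integer,
`C(2iχ - 1 + ξ, ξ) ≡ (-1)^{ξ/2} C(iχ - 1 + ξ/2, ξ/2)` modulo `4`, where `C` is the
generalized binomial coefficient. -/
theorem choose_even_mod_four (χ : ℤ) (i ξ : ℕ) (hi : 0 < i) (heven : 2 ∣ ξ) :
    Ring.choose (2 * (i : ℤ) * χ - 1 + (ξ : ℤ)) ξ ≡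
      (-1) ^ (ξ / 2) * Ring.choose ((i : ℤ) * χ - 1 + ((ξ / 2 : ℕ) : ℤ)) (ξ / 2) [ZMOD 4] :=
  choose_even_mod_four_general χ i ξ heven
end

section
/- Let χ be an integer, i a positive integer, and ξ a positive integer with ξ ≡ 1 or 2 modulo 3. Then the generalized binomial coefficient C(3iχ − 1 + ξ, ξ) is divisible by 3. -/
/-!
By Lucas' theorem, `p ∣ C(m, k)` for naturals `m, k` whose last base-`p` digits satisfy
`m % p < k % p`. The reflection `C(-r, k) = (-1)^k C(r + k - 1, k)` carries this over to every
integer `n` with `n % p < k % p`, since `k - 1 - n` then has last digit `k % p - 1 - n % p`.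
Here `n = 3iχ - 1 + ξ` has last ternary digit `ξ % 3 - 1`, which is smaller than `ξ % 3 ≠ 0`.
-/

theorem Nat.Prime.dvd_choose_of_mod_lt {p n k : ℕ} (hp : p.Prime) (h : n % p < k % p) :
    p ∣ n.choose k := by
  have := Fact.mk hp
  have lucas := Choose.choose_modEq_choose_mod_mul_choose_div_nat (p := p) (n := n) (k := k)
  rw [Nat.choose_eq_zero_of_lt h, zero_mul] at lucas
  exact Nat.modEq_zero_iff_dvd.mp lucas

theorem Int.emod_sub_one_sub_lt_of_emod_lt {p n k : ℤ} (hp : 0 < p) (h : n % p < k % p) :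
    (k - 1 - n) % p < k % p := by
  have hdigits : k - 1 - n = (k % p - 1 - n % p) + p * (k / p - n / p) := by
    have := Int.emod_add_mul_ediv k p
    have := Int.emod_add_mul_ediv n p
    linarith [mul_sub p (k / p) (n / p)]
  have hn := Int.emod_nonneg n hp.ne'
  have hk := Int.emod_lt_of_pos k hp
  rw [hdigits, Int.add_mul_emod_self_left, Int.emod_eq_of_lt (by omega) (by omega)]
  omega

theorem Nat.Prime.intCast_dvd_ringChoose_of_emod_lt {p : ℕ} (hp : p.Prime) {n : ℤ} {k : ℕ}
    (h : n % p < k % p) : (p : ℤ) ∣ Ring.choose n k := by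
  have hp0 : (0 : ℤ) < p := by exact_mod_cast hp.pos
  rcases le_or_gt 0 n with hn | hn
  · lift n to ℕ using hn
    rw [Ring.choose_natCast]
    exact Int.natCast_dvd_natCast.mpr (hp.dvd_choose_of_mod_lt (by exact_mod_cast h))
  · obtain ⟨m, hm⟩ : ∃ m : ℕ, (m : ℤ) = k - 1 - n := ⟨(k - 1 - n).toNat, by omega⟩
    have hm_lt : m % p < k % p := by
      have := Int.emod_sub_one_sub_lt_of_emod_lt hp0 (k := k) h
      rw [← hm] at this
      exact_mod_cast this
    have hreflect : Ring.choose n k = Int.negOnePow k • ((m.choose k : ℕ) : ℤ) := by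
      rw [← Ring.choose_natCast, ← neg_neg n, Ring.choose_neg, hm]
      ring_nf
    rw [hreflect, Units.smul_def]
    exact (Int.natCast_dvd_natCast.mpr (hp.dvd_choose_of_mod_lt hm_lt)).mul_left _

theorem three_dvd_choose_general (χ : ℤ) (i ξ : ℕ)
    (hmod : ξ % 3 = 1 ∨ ξ % 3 = 2) :
    3 ∣ Ring.choose (3 * (i : ℤ) * χ - 1 + (ξ : ℤ)) ξ := by
  have hdigit : (3 * (i : ℤ) * χ - 1 + ξ) % (3 : ℕ) < (ξ : ℤ) % (3 : ℕ) := by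
    rw [mul_assoc]
    omega
  exact_mod_cast Nat.prime_three.intCast_dvd_ringChoose_of_emod_lt hdigit

/-- For `χ ∈ ℤ`, `i ≥ 1` and `ξ` a positive integer with `ξ ≡ 1` or `2 (mod 3)`, the
generalized binomial coefficient `C(3iχ - 1 + ξ, ξ)` is divisible by `3`. -/
theorem three_dvd_choose (χ : ℤ) (i ξ : ℕ) (hi : 0 < i) (hξ : 0 < ξ)
    (hmod : ξ % 3 = 1 ∨ ξ % 3 = 2) :
    3 ∣ Ring.choose (3 * (i : ℤ) * χ - 1 + (ξ : ℤ)) ξ :=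
  three_dvd_choose_general χ i ξ hmod
end

section
/- Let χ be an integer, i a positive integer divisible by 3, and ξ a positive integer with ξ ≡ 1 or 2 modulo 3. Then the generalized binomial coefficient C(3iχ − 1 + ξ, ξ) is divisible by 9. -/
/-!
By the absorption identity `ξ • C(r, ξ) = C(r, ξ - 1) * (r + 1 - ξ)`, any divisor of `r + 1 - ξ`
coprime to `ξ` divides `C(r, ξ)`. Here `r + 1 - ξ = 3iχ` is a multiple of `9`, and `3 ∤ ξ`.
-/

namespace Ring

variable {R : Type*} [CommRing R] [BinomialRing R]

theorem succ_mul_choose_succ (r : R) (k : ℕ) :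
    (k + 1 : R) * choose r (k + 1) = choose r k * (r - k) := by
  have h := choose_smul_choose r (n := k + 1) (Nat.le_succ k)
  rwa [Nat.choose_succ_self_right, Nat.add_sub_cancel_left, choose_one_right, nsmul_eq_mul,
    Nat.cast_succ] at h

theorem dvd_choose_of_isCoprime {d r : R} {n : ℕ} (hn : IsCoprime d n) (hd : d ∣ r + 1 - n) :
    d ∣ choose r n := by
  cases n with
  | zero => exact (isCoprime_zero_right.mp (by simpa using hn)).dvd
  | succ k =>
    push_cast at hn hd
    refine hn.dvd_of_dvd_mul_left ?_
    rw [succ_mul_choose_succ, show r - k = r + 1 - (k + 1) by ring]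
    exact hd.mul_left _

end Ring

theorem nine_dvd_choose_general (χ : ℤ) (i ξ : ℕ) (hi3 : 3 ∣ i)
    (hmod : ξ % 3 = 1 ∨ ξ % 3 = 2) :
    9 ∣ Ring.choose (3 * (i : ℤ) * χ - 1 + (ξ : ℤ)) ξ := by
  have hcop : IsCoprime (9 : ℤ) ξ := by
    have h3 : Nat.Coprime 3 ξ := (Nat.Prime.coprime_iff_not_dvd Nat.prime_three).2 (by omega)
    exact Nat.isCoprime_iff_coprime.2 (by simpa using h3.pow_left 2)
  refine Ring.dvd_choose_of_isCoprime hcop ?_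
  obtain ⟨m, rfl⟩ := hi3
  exact ⟨m * χ, by push_cast; ring⟩

/-- For `χ ∈ ℤ`, `i` a positive integer divisible by `3` and `ξ` a positive integer with
`ξ ≡ 1` or `2 (mod 3)`, the generalized binomial coefficient `C(3iχ - 1 + ξ, ξ)` is
divisible by `9`. -/
theorem nine_dvd_choose (χ : ℤ) (i ξ : ℕ) (hi : 0 < i) (hi3 : 3 ∣ i) (hξ : 0 < ξ)
    (hmod : ξ % 3 = 1 ∨ ξ % 3 = 2) :
    9 ∣ Ring.choose (3 * (i : ℤ) * χ - 1 + (ξ : ℤ)) ξ :=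
  nine_dvd_choose_general χ i ξ hi3 hmod
end

section
/- Let χ be an integer, i a positive integer, and ξ a nonnegative integer divisible by 3. Then (−1)^{ξ} · C(3iχ − 1 + ξ, ξ) ≡ (−1)^{ξ/3} · C(iχ − 1 + ξ/3, ξ/3) modulo 9. -/
/-!
Modulo 9 we have `(1 + X)³ = (1 + X³) + 3(X + X²)` with the second summand of square zero, so
`(1 + X)^(3N) = (1 + X³)^N + 3N(1 + X³)^(N-1)(X + X²)`; the correction term has no
monomials of degree divisible by 3, which gives `C(3N, 3B) ≡ C(N, B)`. Since
`C(x + T, k) ≡ C(x, k) (mod 9)` whenever `9 · k! ∣ T`, this extends to all integers `x`, and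
upper negation `(-1)^k C(a - 1 + k, k) = C(-a, k)` turns it into the stated congruence.
-/

open Polynomial Finset

theorem add_pow_of_sq_eq_zero {R : Type*} [CommRing R] (x y : R) (hy : y ^ 2 = 0) (n : ℕ) :
    (x + y) ^ n = x ^ n + n * x ^ (n - 1) * y := by
  simpa [derivative_X_pow] using eval_add_of_sq_eq_zero (X ^ n) x y hy

theorem Nat.dvd_choose_of_mul_dvd {m j T : ℕ} (hj : 0 < j) (h : m * j ∣ T) :
    m ∣ T.choose j := by
  obtain ⟨k, rfl⟩ := Nat.exists_eq_add_one_of_ne_zero hj.ne'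
  cases T with
  | zero => simp
  | succ n =>
    have h' : m * (k + 1) ∣ (n + 1).choose (k + 1) * (k + 1) :=
      Nat.add_one_mul_choose_eq n k ▸ h.mul_right _
    exact Nat.dvd_of_mul_dvd_mul_right k.succ_pos h'

theorem Polynomial.coeff_expand_mul_X_pow_of_lt {R : Type*} [CommSemiring R] {p r : ℕ}
    (hr : 0 < r) (hrp : r < p) (f : R[X]) (n : ℕ) :
    (expand R p f * X ^ r).coeff (p * n) = 0 := by
  rw [coeff_mul_X_pow', coeff_expand (by omega)]
  split_ifs with hle hdvd <;> try rfl
  have : p ∣ r := by simpa [Nat.sub_sub_self hle] using Nat.dvd_sub (dvd_mul_right p n) hdvd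
  exact absurd (Nat.le_of_dvd hr this) (by omega)

theorem Int.neg_one_pow_mul_choose_eq_choose_neg (a : ℤ) (k : ℕ) :
    (-1) ^ k * Ring.choose (a - 1 + k) k = Ring.choose (-a) k := by
  rw [Ring.choose_neg, Units.smul_def, Int.coe_negOnePow_natCast, smul_eq_mul, sub_add_eq_add_sub]

open Nat in
theorem Ring.choose_add_modEq {m k T : ℕ} (x : ℤ) (hT : m * k ! ∣ T) :
    Ring.choose (x + T) k ≡ Ring.choose x k [ZMOD m] := by
  cases k with
  | zero => simp
  | succ k =>
    rw [Ring.add_choose_eq _ (Commute.all _ _), Nat.sum_antidiagonal_succ', Ring.choose_natCast,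
      Nat.choose_zero_right, Nat.cast_one, mul_one]
    have hdvd : (m : ℤ) ∣
        ∑ ij ∈ antidiagonal k, Ring.choose x ij.1 * Ring.choose (T : ℤ) (ij.2 + 1) := by
      refine Finset.dvd_sum fun ij hij => Dvd.dvd.mul_left ?_ _
      rw [Ring.choose_natCast]
      refine Int.natCast_dvd_natCast.mpr (Nat.dvd_choose_of_mul_dvd ij.2.succ_pos ?_)
      refine dvd_trans (mul_dvd_mul_left m (Nat.dvd_factorial ij.2.succ_pos ?_)) hT
      have := mem_antidiagonal.mp hij
      omega
    simpa using (Int.modEq_zero_iff_dvd.mpr hdvd).add_left (Ring.choose x (k + 1))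

theorem Nat.choose_three_mul_modEq_nine (N B : ℕ) :
    (3 * N).choose (3 * B) ≡ N.choose B [MOD 9] := by
  have hsq : (C (3 : ZMod 9) * (X ^ 1 + X ^ 2)) ^ 2 = 0 := by
    rw [mul_pow, ← C_pow, show (3 : ZMod 9) ^ 2 = 0 from rfl, C_0, zero_mul]
  have hcube : ((1 : (ZMod 9)[X]) + X) ^ 3 =
      expand (ZMod 9) 3 (1 + X) + C 3 * (X ^ 1 + X ^ 2) := by
    simp only [map_add, map_one, expand_X, C_ofNat]; ring
  have hexpansion : ((1 : (ZMod 9)[X]) + X) ^ (3 * N) = expand (ZMod 9) 3 ((1 + X) ^ N) +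
      C (3 * N : ZMod 9) * (expand (ZMod 9) 3 ((1 + X) ^ (N - 1)) * X ^ 1 +
        expand (ZMod 9) 3 ((1 + X) ^ (N - 1)) * X ^ 2) := by
    rw [pow_mul, hcube, add_pow_of_sq_eq_zero _ _ hsq, map_pow, map_pow]
    simp only [C_mul, map_natCast]; ring
  have key := congrArg (coeff · (3 * B)) hexpansion
  simp only [coeff_add, coeff_C_mul, coeff_expand_mul' three_pos, coeff_one_add_X_pow,
    coeff_expand_mul_X_pow_of_lt one_pos (by norm_num : 1 < 3),
    coeff_expand_mul_X_pow_of_lt two_pos (by norm_num : 2 < 3), add_zero, mul_zero] at key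
  exact (ZMod.natCast_eq_natCast_iff _ _ _).mp key

open Nat in
theorem Int.choose_three_mul_modEq_nine (x : ℤ) (b : ℕ) :
    Ring.choose (3 * x) (3 * b) ≡ Ring.choose x b [ZMOD 9] := by
  -- a shift by a multiple of `9 · (3b)!` makes the argument a natural number
  set T := 9 * (3 * b)! * x.natAbs
  obtain ⟨N, hN⟩ : ∃ N : ℕ, (N : ℤ) = x + T := by
    refine ⟨(x + T).toNat, Int.toNat_of_nonneg ?_⟩
    have : x.natAbs ≤ T := Nat.le_mul_of_pos_left _ (by positivity)
    omega
  have hT : 9 * b ! ∣ T :=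
    (mul_dvd_mul_left 9 (Nat.factorial_dvd_factorial (by omega))).mul_right _
  have h3T : 9 * (3 * b)! ∣ 3 * T := (dvd_mul_right _ _).mul_left 3
  calc Ring.choose (3 * x) (3 * b)
      ≡ Ring.choose (3 * x + (3 * T : ℕ)) (3 * b) [ZMOD 9] := (Ring.choose_add_modEq _ h3T).symm
    _ = ((3 * N).choose (3 * b) : ℕ) := by
      rw [← Ring.choose_natCast]; push_cast; rw [hN, mul_add]
    _ ≡ (N.choose b : ℕ) [ZMOD 9] :=
      Int.natCast_modEq_iff.mpr (Nat.choose_three_mul_modEq_nine N b)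
    _ = Ring.choose (x + T) b := by rw [← Ring.choose_natCast, hN]
    _ ≡ Ring.choose x b [ZMOD 9] := Ring.choose_add_modEq _ hT

theorem choose_mul_three_mod_nine_general (χ : ℤ) (i ξ : ℕ) (h3 : 3 ∣ ξ) :
    (-1) ^ ξ * Ring.choose (3 * (i : ℤ) * χ - 1 + (ξ : ℤ)) ξ ≡
      (-1) ^ (ξ / 3) * Ring.choose ((i : ℤ) * χ - 1 + ((ξ / 3 : ℕ) : ℤ)) (ξ / 3) [ZMOD 9] := by
  obtain ⟨b, rfl⟩ := h3
  rw [Nat.mul_div_cancel_left b three_pos, Int.neg_one_pow_mul_choose_eq_choose_neg,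
    Int.neg_one_pow_mul_choose_eq_choose_neg, mul_assoc, ← mul_neg]
  exact Int.choose_three_mul_modEq_nine _ b

/-- For `χ ∈ ℤ`, `i ≥ 1` and `ξ` a nonnegative integer divisible by `3`,
`(-1)^ξ C(3iχ - 1 + ξ, ξ) ≡ (-1)^{ξ/3} C(iχ - 1 + ξ/3, ξ/3)` modulo `9`, where `C` is the
generalized binomial coefficient. -/
theorem choose_mul_three_mod_nine (χ : ℤ) (i ξ : ℕ) (hi : 0 < i) (h3 : 3 ∣ ξ) :
    (-1) ^ ξ * Ring.choose (3 * (i : ℤ) * χ - 1 + (ξ : ℤ)) ξ ≡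
      (-1) ^ (ξ / 3) * Ring.choose ((i : ℤ) * χ - 1 + ((ξ / 3 : ℕ) : ℤ)) (ξ / 3) [ZMOD 9] :=
  choose_mul_three_mod_nine_general χ i ξ h3
end

section
/- Let χ be an integer, a a positive even integer, and p a partition of a that has at least one odd part. Writing d_i = p_i − p_{i+1} for i ≥ 1, the finite product ∏_{i≥1} C(2iχ − 1 + d_i, d_i) is divisible by 4. -/
/-!
Write `d_i` for the jumps of the parts `p_i`. A factor with `d_i` odd is `C(x - 1 + d, d)` with
`x = 2iχ`, and `d · C(x - 1 + d, d) = ± x · C(-x - 1, d - 1)`, so the factor is even, and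
divisible by `4` when `i` is even. Since `p_i = ∑_{j ≥ i} d_j`, an odd part forces an odd jump.
If there are two odd jumps we are done; if `d_t` is the only one, then exactly `p_1, …, p_t` are
odd, and `a = ∑ p_i` even forces `t` even.
-/

open Finset

/-- The parts of a partition `p` of `a`, viewed as a weakly decreasing sequence
`p_1 ≥ p_2 ≥ ⋯` padded with zeros; `partSeq p i` is the part `p_{i+1}` (0-indexed). -/
def partSeq {a : ℕ} (p : Nat.Partition a) (i : ℕ) : ℕ :=
  (p.parts.sort (· ≥ ·)).getD i 0

theorem Int.dvd_choose_of_dvd {n r : ℤ} {k : ℕ} (hr : n ∣ r) (hk : IsCoprime n k) :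
    n ∣ Ring.choose r k := by
  cases k with
  | zero => simpa using (isCoprime_zero_right.mp (by simpa using hk)).dvd
  | succ k =>
    have hmul : ((k + 1 : ℕ) : ℤ) * Ring.choose r (k + 1) = r * Ring.choose (r - 1) k := by
      simpa [nsmul_eq_mul] using Ring.choose_smul_choose r (Nat.le_add_left 1 k)
    exact hk.dvd_of_dvd_mul_left (hmul ▸ hr.mul_right _)

theorem Int.dvd_choose_sub_one_add {n x : ℤ} {d : ℕ} (hx : n ∣ x) (hd : IsCoprime n d) :
    n ∣ Ring.choose (x - 1 + d) d := by
  have hneg : Ring.choose (-x) d = Int.negOnePow d • Ring.choose (x - 1 + d) d := by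
    rw [Ring.choose_neg, add_sub_right_comm]
  have := Int.dvd_choose_of_dvd (dvd_neg.mpr hx) hd
  rwa [hneg, Units.smul_def, smul_eq_mul, Units.dvd_mul_left] at this

theorem Finset.mul_dvd_prod_of_ne {ι M : Type*} [CommMonoid M] [DecidableEq ι] {s : Finset ι}
    {f : ι → M} {i j : ι} (hi : i ∈ s) (hj : j ∈ s) (hij : i ≠ j) :
    f i * f j ∣ ∏ k ∈ s, f k := by
  rw [← prod_pair hij]
  exact prod_dvd_prod_of_subset _ _ _ (insert_subset hi (singleton_subset_iff.mpr hj))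

theorem List.sum_range_getD {M : Type*} [AddCommMonoid M] (l : List M) {n : ℕ}
    (hn : l.length ≤ n) : ∑ i ∈ Finset.range n, l.getD i 0 = l.sum := by
  induction l generalizing n with
  | nil => simp
  | cons x l ih =>
    obtain ⟨m, rfl⟩ : ∃ m, n = m + 1 := ⟨n - 1, by simp at hn; omega⟩
    rw [Finset.sum_range_succ', List.sum_cons, add_comm]
    simp only [List.getD_cons_succ, List.getD_cons_zero]
    rw [ih (by simpa using hn)]

theorem List.SortedGE.antitone_getD {l : List ℕ} (hl : l.SortedGE) :
    Antitone (l.getD · 0) := by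
  intro i j hij
  by_cases hj : j < l.length
  · simp only [List.getD_eq_getElem _ _ hj, List.getD_eq_getElem _ _ (hij.trans_lt hj)]
    exact hl.getElem_ge_getElem_of_le hij
  · show l.getD j 0 ≤ l.getD i 0
    rw [List.getD_eq_default _ _ (not_lt.mp hj)]
    exact Nat.zero_le _

theorem Antitone.eq_add_sum_Ico_tsub {f : ℕ → ℕ} (hf : Antitone f) {i n : ℕ} (hin : i ≤ n) :
    f i = f n + ∑ j ∈ Ico i n, (f j - f (j + 1)) := by
  induction n, hin using Nat.le_induction with
  | base => simp
  | succ n hin ih =>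
    rw [sum_Ico_succ_top hin]
    have : f (n + 1) ≤ f n := hf (by omega)
    omega

section OddJumps

variable {f : ℕ → ℕ} {n : ℕ}

theorem odd_iff_odd_card_odd_jumps (hf : Antitone f) (hn : f n = 0) {i : ℕ} (hi : i ≤ n) :
    Odd (f i) ↔ Odd #{j ∈ (range n).filter (fun j ↦ Odd (f j - f (j + 1))) | i ≤ j} := by
  rw [hf.eq_add_sum_Ico_tsub hi, hn, zero_add, odd_sum_iff_odd_card_odd, filter_filter]
  congr! 2
  ext j
  simp only [mem_filter, mem_Ico, mem_range]
  tauto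

theorem two_odd_jumps_or_odd_jump_at_odd (hf : Antitone f) (hn : f n = 0)
    (hsum : Even (∑ i ∈ range n, f i)) (hodd : ∃ i < n, Odd (f i)) :
    (∃ i ∈ range n, ∃ j ∈ range n, i ≠ j ∧ Odd (f i - f (i + 1)) ∧ Odd (f j - f (j + 1))) ∨
      ∃ t ∈ range n, Odd (f t - f (t + 1)) ∧ Odd t := by
  set T := (range n).filter (fun j ↦ Odd (f j - f (j + 1))) with hT
  rcases lt_or_ge 1 #T with hT2 | hT1
  · obtain ⟨i, hi, j, hj, hij⟩ := one_lt_card.mp hT2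
    rw [mem_filter] at hi hj
    exact .inl ⟨i, hi.1, j, hj.1, hij, hi.2, hj.2⟩
  obtain ⟨t, hTt⟩ : ∃ t, T = {t} := by
    obtain ⟨i, hi, hfi⟩ := hodd
    have hne : T.Nonempty :=
      (card_pos.mp ((odd_iff_odd_card_odd_jumps hf hn hi.le).mp hfi).pos).mono (filter_subset _ _)
    exact card_eq_one.mp (by have := hne.card_pos; omega)
  have ht : t ∈ T := hTt ▸ mem_singleton_self t
  rw [mem_filter, mem_range] at ht
  refine .inr ⟨t, mem_range.mpr ht.1, ht.2, ?_⟩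
  have hodd_parts : (range n).filter (fun i ↦ Odd (f i)) = range (t + 1) := by
    ext i
    simp only [mem_filter, mem_range]
    constructor
    · rintro ⟨hi, hfi⟩
      by_contra hti
      rw [odd_iff_odd_card_odd_jumps hf hn hi.le, ← hT, hTt, filter_singleton,
        if_neg (by omega)] at hfi
      simp at hfi
    · intro hi
      refine ⟨by omega, ?_⟩
      rw [odd_iff_odd_card_odd_jumps hf hn (by omega), ← hT, hTt, filter_singleton,
        if_pos (by omega)]
      simp
  rw [even_sum_iff_even_card_odd, hodd_parts, card_range, Nat.even_add_one] at hsum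
  exact Nat.not_even_iff_odd.mp hsum

end OddJumps

namespace Nat.Partition

variable {a : ℕ} (p : Nat.Partition a)

theorem card_parts_le : Multiset.card p.parts ≤ a := by
  simpa [p.parts_sum] using Multiset.card_nsmul_le_sum fun _ hx ↦ p.parts_pos hx

theorem length_sort_parts_le : (p.parts.sort (· ≥ ·)).length ≤ a := by
  rw [Multiset.length_sort]
  exact p.card_parts_le

theorem partSeq_antitone : Antitone (partSeq p) :=
  (List.sortedGE_iff_pairwise.mpr (Multiset.pairwise_sort _ _)).antitone_getD

theorem partSeq_of_le {i : ℕ} (hi : a ≤ i) : partSeq p i = 0 :=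
  List.getD_eq_default _ _ (p.length_sort_parts_le.trans hi)

theorem sum_range_partSeq : ∑ i ∈ range a, partSeq p i = a := by
  unfold partSeq
  rw [List.sum_range_getD _ p.length_sort_parts_le, ← Multiset.sum_coe,
    Multiset.sort_eq, p.parts_sum]

theorem exists_partSeq_eq_of_mem {x : ℕ} (hx : x ∈ p.parts) : ∃ i < a, partSeq p i = x := by
  obtain ⟨i, hi, rfl⟩ := List.getElem_of_mem ((Multiset.mem_sort (· ≥ ·)).mpr hx)
  exact ⟨i, hi.trans_le p.length_sort_parts_le, List.getD_eq_getElem _ _ hi⟩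

end Nat.Partition

theorem four_dvd_prod_choose_general (χ : ℤ) (a : ℕ) (ha2 : 2 ∣ a)
    (p : Nat.Partition a) (hodd : ∃ x ∈ p.parts, Odd x) :
    4 ∣ ∏ i ∈ Finset.range a,
        Ring.choose (2 * ((i : ℤ) + 1) * χ - 1 + ((partSeq p i - partSeq p (i + 1) : ℕ) : ℤ))
          (partSeq p i - partSeq p (i + 1)) := by
  have two_dvd {i : ℕ} (hd : Odd (partSeq p i - partSeq p (i + 1))) :
      2 ∣ Ring.choose (2 * ((i : ℤ) + 1) * χ - 1 + ((partSeq p i - partSeq p (i + 1) : ℕ) : ℤ))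
        (partSeq p i - partSeq p (i + 1)) :=
    Int.dvd_choose_sub_one_add ((dvd_mul_right 2 _).mul_right χ)
      (Int.isCoprime_two_left.mpr hd.natCast)
  have four_dvd {i : ℕ} (hi : Odd i) (hd : Odd (partSeq p i - partSeq p (i + 1))) :
      4 ∣ Ring.choose (2 * ((i : ℤ) + 1) * χ - 1 + ((partSeq p i - partSeq p (i + 1) : ℕ) : ℤ))
        (partSeq p i - partSeq p (i + 1)) := by
    obtain ⟨k, rfl⟩ := hi
    refine Int.dvd_choose_sub_one_add ⟨(k + 1) * χ, by push_cast; ring⟩ ?_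
    simpa using (Int.isCoprime_two_left.mpr hd.natCast).pow_left (m := 2)
  obtain ⟨x, hx, hxodd⟩ := hodd
  obtain ⟨i, hia, rfl⟩ := p.exists_partSeq_eq_of_mem hx
  rcases two_odd_jumps_or_odd_jump_at_odd p.partSeq_antitone (p.partSeq_of_le le_rfl)
      (by rwa [p.sum_range_partSeq, even_iff_two_dvd]) ⟨i, hia, hxodd⟩ with
    ⟨i, hi, j, hj, hij, hdi, hdj⟩ | ⟨t, ht, hdt, hto⟩
  · exact (mul_dvd_mul (two_dvd hdi) (two_dvd hdj)).trans (mul_dvd_prod_of_ne hi hj hij)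
  · exact (four_dvd hto hdt).trans (dvd_prod_of_mem _ ht)

/-- Let `χ ∈ ℤ`, let `a` be a positive even integer, and let `p` be a partition of `a`
with at least one odd part.  With `d_i = p_i - p_{i+1}`, the product
`∏_{i ≥ 1} C(2iχ - 1 + d_i, d_i)` is divisible by `4`.  A partition of `a` has at most
`a` parts, so `d_i = 0` and the factor equals `1` for `i > a`; hence the (finite) product
may be taken over `1 ≤ i ≤ a`. -/
theorem four_dvd_prod_choose (χ : ℤ) (a : ℕ) (ha : 0 < a) (ha2 : 2 ∣ a)
    (p : Nat.Partition a) (hodd : ∃ x ∈ p.parts, Odd x) :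
    4 ∣ ∏ i ∈ Finset.range a,
        Ring.choose (2 * ((i : ℤ) + 1) * χ - 1 + ((partSeq p i - partSeq p (i + 1) : ℕ) : ℤ))
          (partSeq p i - partSeq p (i + 1)) :=
  four_dvd_prod_choose_general χ a ha2 p hodd
end

section
/- Let χ be an integer, a a positive even integer, and p a partition of a all of whose parts are even. Writing d_i = p_i − p_{i+1} for i ≥ 1 (so each d_i is even), one has the congruence ∏_{i≥1} C(2iχ − 1 + d_i, d_i) ≡ (−1)^{a/2} · ∏_{i≥1} C(iχ − 1 + d_i/2, d_i/2) modulo 4, both products being finite. -/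
/-!
Write `d_i = 2 e_i`. Splitting `(2y - 1 + 2e)(2y - 2 + 2e) ⋯ (2y)` and `(2e)!` into even and odd
factors gives `C(2y - 1 + 2e, 2e) · ∏_{t<e} (2t + 1) = C(y - 1 + e, e) · ∏_{t<e} (2y + 2t + 1)`.
Since `2y + 2t + 1 ≡ (2y + 1)(2t + 1) mod 4` and the odd product is invertible mod 4, this yields
`C(2y - 1 + 2e, 2e) ≡ (2y + 1)^e C(y - 1 + e, e) mod 4`. For `y = iχ` the factor `(2y + 1)^e` may be
replaced by `(-1)^{ie}`: when `y` is odd so is `i`, and when `y` is even and `ie` odd,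
`C(y - 1 + e, e)` is even. Finally `∑ i e_i = a / 2` by Abel summation of `∑ i (p_i - p_{i+1})`.
-/

open Finset

theorem Nat.factorial_two_mul_eq_prod_odd (e : ℕ) :
    (2 * e).factorial = 2 ^ e * e.factorial * ∏ t ∈ Finset.range e, (2 * t + 1) := by
  induction e with
  | zero => simp
  | succ e ih =>
    rw [show 2 * (e + 1) = 2 * e + 1 + 1 by ring, factorial_succ, factorial_succ, ih,
      prod_range_succ, factorial_succ, pow_succ]
    ring

theorem ascPochhammer_eval_two_mul {R : Type*} [CommSemiring R] (y : R) (e : ℕ) :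
    (ascPochhammer R (2 * e)).eval (2 * y) =
      2 ^ e * (ascPochhammer R e).eval y * ∏ t ∈ Finset.range e, (2 * (y + t) + 1) := by
  induction e with
  | zero => simp
  | succ e ih =>
    rw [show 2 * (e + 1) = 2 * e + 1 + 1 by ring, ascPochhammer_succ_eval,
      ascPochhammer_succ_eval, ih, ascPochhammer_succ_eval, prod_range_succ]
    push_cast
    ring

theorem Int.factorial_mul_choose_eq_ascPochhammer (x : ℤ) (n : ℕ) :
    (n.factorial : ℤ) * Ring.choose x n = (ascPochhammer ℤ n).eval (x - n + 1) := by
  rw [← descPochhammer_eval_eq_ascPochhammer, Polynomial.eval_eq_smeval,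
    Ring.descPochhammer_eq_factorial_smul_choose, nsmul_eq_mul]

theorem Int.choose_two_mul_mul_prod_odd (y : ℤ) (e : ℕ) :
    Ring.choose (2 * y - 1 + 2 * e) (2 * e) * ∏ t ∈ Finset.range e, (2 * (t : ℤ) + 1) =
      Ring.choose (y - 1 + e) e * ∏ t ∈ Finset.range e, (2 * (y + t) + 1) := by
  have hX := Int.factorial_mul_choose_eq_ascPochhammer (2 * y - 1 + 2 * e) (2 * e)
  have hY := Int.factorial_mul_choose_eq_ascPochhammer (y - 1 + e) e
  have hF : ((2 * e).factorial : ℤ) =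
      2 ^ e * e.factorial * ∏ t ∈ Finset.range e, (2 * (t : ℤ) + 1) := by
    exact_mod_cast Nat.factorial_two_mul_eq_prod_odd e
  rw [show 2 * y - 1 + 2 * (e : ℤ) - ((2 * e : ℕ) : ℤ) + 1 = 2 * y by push_cast; ring,
    ascPochhammer_eval_two_mul] at hX
  rw [show y - 1 + e - e + 1 = y by ring] at hY
  refine mul_left_cancel₀ (by positivity : (2 : ℤ) ^ e * e.factorial ≠ 0) ?_
  linear_combination hX - Ring.choose (2 * y - 1 + 2 * e) (2 * e) * hF
    - 2 ^ e * (∏ t ∈ Finset.range e, (2 * (y + t) + 1)) * hY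

theorem Int.ModEq.cancel_right_of_isCoprime {m a b c : ℤ} (hm : 0 < m) (hc : IsCoprime m c)
    (h : a * c ≡ b * c [ZMOD m]) : a ≡ b [ZMOD m] := by
  simpa [Int.isCoprime_iff_gcd_eq_one.mp hc] using h.cancel_right_div_gcd hm

theorem Int.choose_two_mul_modEq_four (y : ℤ) (e : ℕ) :
    Ring.choose (2 * y - 1 + 2 * e) (2 * e) ≡ (2 * y + 1) ^ e * Ring.choose (y - 1 + e) e
      [ZMOD 4] := by
  have hP : IsCoprime 4 (∏ t ∈ Finset.range e, (2 * (t : ℤ) + 1)) := by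
    have hodd : Odd (∏ t ∈ Finset.range e, (2 * (t : ℤ) + 1)) :=
      Finset.prod_induction _ Odd (fun _ _ => Odd.mul) odd_one fun t _ => odd_two_mul_add_one _
    simpa using (Int.isCoprime_two_left.mpr hodd).pow_left (m := 2)
  have hQ : ∏ t ∈ Finset.range e, (2 * (y + t) + 1) ≡
      (2 * y + 1) ^ e * ∏ t ∈ Finset.range e, (2 * (t : ℤ) + 1) [ZMOD 4] := by
    rw [Finset.pow_eq_prod_const, ← Finset.prod_mul_distrib]
    exact Int.ModEq.prod fun t _ => Int.modEq_iff_dvd.mpr ⟨y * t, by ring⟩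
  refine Int.ModEq.cancel_right_of_isCoprime (by norm_num) hP ?_
  rw [Int.choose_two_mul_mul_prod_odd, mul_assoc, mul_left_comm]
  exact hQ.mul_left _

theorem Int.even_choose_of_even_of_odd {x : ℤ} {e : ℕ} (hx : Even x) (he : Odd e) :
    Even (Ring.choose x e) := by
  have h := Ring.choose_smul_choose x (Nat.one_le_iff_ne_zero.mpr he.pos.ne')
  rw [Nat.choose_one_right, Ring.choose_one_right, nsmul_eq_mul] at h
  have hprod : Even ((e : ℤ) * Ring.choose x e) := h ▸ hx.mul_right _
  exact (Int.even_mul.mp hprod).resolve_left (by exact_mod_cast Nat.not_even_iff_odd.mpr he)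

theorem Int.choose_two_mul_modEq_four_neg_one_pow {y : ℤ} {k : ℕ} (hyk : Odd y → Odd k) (e : ℕ) :
    Ring.choose (2 * y - 1 + 2 * e) (2 * e) ≡ (-1) ^ (k * e) * Ring.choose (y - 1 + e) e
      [ZMOD 4] := by
  refine (Int.choose_two_mul_modEq_four y e).trans ?_
  rcases Int.even_or_odd y with ⟨c, rfl⟩ | ⟨c, rfl⟩
  · have h1 : 2 * (c + c) + 1 ≡ 1 [ZMOD 4] := Int.modEq_iff_dvd.mpr ⟨-c, by ring⟩
    refine ((h1.pow e).mul_right _).trans ?_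
    rw [one_pow, one_mul]
    rcases Nat.even_or_odd (k * e) with hke | hke
    · rw [hke.neg_one_pow, one_mul]
    · obtain ⟨m, rfl⟩ := (Nat.odd_mul.mp hke).2
      obtain ⟨b, hb⟩ := Int.even_choose_of_even_of_odd (x := c + c - 1 + (2 * m + 1 : ℕ))
        ⟨c + m, by push_cast; ring⟩ ⟨m, rfl⟩
      rw [hke.neg_one_pow, hb]
      exact Int.modEq_iff_dvd.mpr ⟨-b, by ring⟩
  · have h1 : 2 * (2 * c + 1) + 1 ≡ -1 [ZMOD 4] := Int.modEq_iff_dvd.mpr ⟨-c - 1, by ring⟩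
    rw [pow_mul, (hyk ⟨c, rfl⟩).neg_one_pow]
    exact (h1.pow e).mul_right _

theorem Finset.sum_range_succ_mul_sub_add_mul {f : ℕ → ℕ} (hf : ∀ i, f (i + 1) ≤ f i) (n : ℕ) :
    ∑ i ∈ range n, (i + 1) * (f i - f (i + 1)) + n * f n = ∑ i ∈ range n, f i := by
  induction n with
  | zero => simp
  | succ n ih =>
    obtain ⟨d, hd⟩ := Nat.exists_eq_add_of_le (hf n)
    rw [sum_range_succ, sum_range_succ, ← ih, hd, Nat.add_sub_cancel_left]
    ring

theorem Nat.Partition.card_parts_le_s17 {a : ℕ} (p : Nat.Partition a) :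
    Multiset.card p.parts ≤ a := by
  simpa [p.parts_sum] using Multiset.card_nsmul_le_sum fun x hx => p.parts_pos hx

section partSeq

variable {a : ℕ} (p : Nat.Partition a)

theorem length_sort_parts_le : (p.parts.sort (· ≥ ·)).length ≤ a := by
  rw [Multiset.length_sort]
  exact p.card_parts_le_s17

theorem partSeq_succ_le (i : ℕ) : partSeq p (i + 1) ≤ partSeq p i := by
  unfold partSeq
  by_cases h : i + 1 < (p.parts.sort (· ≥ ·)).length
  · rw [List.getD_eq_getElem _ _ h, List.getD_eq_getElem _ _ (by omega)]
    exact List.pairwise_iff_getElem.mp (p.parts.pairwise_sort _) i (i + 1) _ h (by omega)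
  · rw [List.getD_eq_default _ _ (by omega)]
    exact Nat.zero_le _

theorem partSeq_eq_zero_of_le {i : ℕ} (hi : a ≤ i) : partSeq p i = 0 :=
  List.getD_eq_default _ _ ((length_sort_parts_le p).trans hi)

theorem sum_range_partSeq : ∑ i ∈ range a, partSeq p i = a := by
  unfold partSeq
  rw [List.sum_range_getD _ (length_sort_parts_le p), ← Multiset.sum_coe,
    Multiset.sort_eq, p.parts_sum]

theorem two_dvd_partSeq (heven : ∀ x ∈ p.parts, 2 ∣ x) (i : ℕ) : 2 ∣ partSeq p i := by
  unfold partSeq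
  by_cases h : i < (p.parts.sort (· ≥ ·)).length
  · rw [List.getD_eq_getElem _ _ h]
    exact heven _ ((Multiset.mem_sort _).mp (List.getElem_mem h))
  · rw [List.getD_eq_default _ _ (by omega)]
    exact dvd_zero 2

theorem sum_range_mul_partSeq_sub :
    ∑ i ∈ range a, (i + 1) * (partSeq p i - partSeq p (i + 1)) = a := by
  simpa [partSeq_eq_zero_of_le p le_rfl, sum_range_partSeq] using
    sum_range_succ_mul_sub_add_mul (partSeq_succ_le p) a

theorem sum_range_mul_half_partSeq_sub (heven : ∀ x ∈ p.parts, 2 ∣ x) :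
    ∑ i ∈ range a, (i + 1) * ((partSeq p i - partSeq p (i + 1)) / 2) = a / 2 := by
  have h : a = 2 * ∑ i ∈ range a, (i + 1) * ((partSeq p i - partSeq p (i + 1)) / 2) := by
    conv_lhs => rw [← sum_range_mul_partSeq_sub p]
    rw [mul_sum]
    refine sum_congr rfl fun i _ => ?_
    rw [mul_left_comm, Nat.mul_div_cancel' (Nat.dvd_sub (two_dvd_partSeq p heven i)
      (two_dvd_partSeq p heven (i + 1)))]
  omega

end partSeq

theorem prod_choose_even_parts_mod_four_general (χ : ℤ) (a : ℕ)
    (p : Nat.Partition a) (heven : ∀ x ∈ p.parts, 2 ∣ x) :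
    (∏ i ∈ Finset.range a,
        Ring.choose (2 * ((i : ℤ) + 1) * χ - 1 + ((partSeq p i - partSeq p (i + 1) : ℕ) : ℤ))
          (partSeq p i - partSeq p (i + 1))) ≡
      (-1) ^ (a / 2) *
        ∏ i ∈ Finset.range a,
          Ring.choose (((i : ℤ) + 1) * χ - 1 + (((partSeq p i - partSeq p (i + 1)) / 2 : ℕ) : ℤ))
            ((partSeq p i - partSeq p (i + 1)) / 2) [ZMOD 4] := by
  rw [← sum_range_mul_half_partSeq_sub p heven, ← prod_pow_eq_pow_sum, ← prod_mul_distrib]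
  refine Int.ModEq.prod fun i _ => ?_
  obtain ⟨e, he⟩ := Nat.dvd_sub (two_dvd_partSeq p heven i) (two_dvd_partSeq p heven (i + 1))
  rw [he, Nat.mul_div_cancel_left e two_pos, mul_assoc, Nat.cast_mul, Nat.cast_two]
  exact Int.choose_two_mul_modEq_four_neg_one_pow
    (fun h => by exact_mod_cast (Int.odd_mul.mp h).1) e

/-- Let `χ ∈ ℤ`, let `a` be a positive even integer, and let `p` be a partition of `a`
all of whose parts are even.  With `d_i = p_i - p_{i+1}` (each `d_i` even), one has
`∏_{i ≥ 1} C(2iχ - 1 + d_i, d_i) ≡ (-1)^{a/2} ∏_{i ≥ 1} C(iχ - 1 + d_i/2, d_i/2)`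
modulo `4`.  A partition of `a` has at most `a` parts, so `d_i = 0` and both factors
equal `1` for `i > a`; hence the (finite) products may be taken over `1 ≤ i ≤ a`. -/
theorem prod_choose_even_parts_mod_four (χ : ℤ) (a : ℕ) (ha : 0 < a) (ha2 : 2 ∣ a)
    (p : Nat.Partition a) (heven : ∀ x ∈ p.parts, 2 ∣ x) :
    (∏ i ∈ Finset.range a,
        Ring.choose (2 * ((i : ℤ) + 1) * χ - 1 + ((partSeq p i - partSeq p (i + 1) : ℕ) : ℤ))
          (partSeq p i - partSeq p (i + 1))) ≡
      (-1) ^ (a / 2) *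
        ∏ i ∈ Finset.range a,
          Ring.choose (((i : ℤ) + 1) * χ - 1 + (((partSeq p i - partSeq p (i + 1)) / 2 : ℕ) : ℤ))
            ((partSeq p i - partSeq p (i + 1)) / 2) [ZMOD 4] :=
  prod_choose_even_parts_mod_four_general χ a p heven
end
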